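/- arXiv:2405.14372 — 10 statements merged into one kernel-verified Lean document; each statement's English description precedes it below -/
import Mathlib

section
/- (Strong duality with bounded Lagrange multipliers.) Under Slater's condition (ρ > 0), the following three quantities are equal: (i) min over λ ∈ ℝ^m with λ ≥ 0 and ‖λ‖₁ ≤ L/ρ of max over q ∈ Q of ( r·q − Σ_{i=1}^m λ_i (G_i·q − α_i) ); (ii) max over q ∈ Q of min over λ ∈ ℝ^m with λ ≥ 0 and ‖λ‖₁ ≤ L/ρ of ( r·q − Σ_{i=1}^m λ_i (G_i·q − α_i) ); (iii) OPT. -/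
/-!
Statement 4 (Strong duality with bounded Lagrange multipliers).
Let `Q ⊆ [0,1]^n` be a nonempty compact convex set with `Σ_j q_j = L` on `Q`,
`r, G_1, …, G_m ∈ [0,1]^n`, `α ∈ [0,L]^m`, and feasibility parameter
`ρ = sup_{q ∈ Q} min_i (α_i − G_i·q)`. Under Slater's condition `ρ > 0`,
`min_{λ ≥ 0, ‖λ‖₁ ≤ L/ρ} max_{q ∈ Q} (r·q − Σ_i λ_i (G_i·q − α_i))
 = max_{q ∈ Q} min_{λ ≥ 0, ‖λ‖₁ ≤ L/ρ} (r·q − Σ_i λ_i (G_i·q − α_i)) = OPT`.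
-/

open Finset

set_option maxHeartbeats 1000000 in
theorem strong_duality_bounded_multipliers
    (n m : ℕ) (hn : 1 ≤ n) (hm : 1 ≤ m) (L : ℝ) (hL : 0 < L)
    (Q : Set (Fin n → ℝ)) (hQne : Q.Nonempty) (hQcpt : IsCompact Q)
    (hQcvx : Convex ℝ Q) (hQbox : ∀ q ∈ Q, ∀ j, q j ∈ Set.Icc (0 : ℝ) 1)
    (hQsum : ∀ q ∈ Q, ∑ j, q j = L)
    (r : Fin n → ℝ) (hr : ∀ j, r j ∈ Set.Icc (0 : ℝ) 1)
    (G : Fin m → Fin n → ℝ) (hG : ∀ i j, G i j ∈ Set.Icc (0 : ℝ) 1)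
    (α : Fin m → ℝ) (hα : ∀ i, α i ∈ Set.Icc (0 : ℝ) L)
    (ρ : ℝ) (hρ : ρ = sSup ((fun q => ⨅ i : Fin m, (α i - ∑ j, G i j * q j)) '' Q))
    (hSlater : 0 < ρ) :
    sInf ((fun lam => sSup ((fun q => (∑ j, r j * q j) -
            ∑ i, lam i * ((∑ j, G i j * q j) - α i)) '' Q)) ''
          {lam : Fin m → ℝ | (∀ i, 0 ≤ lam i) ∧ ∑ i, |lam i| ≤ L / ρ})
      = sSup ((fun q => ∑ j, r j * q j) ''
          {q ∈ Q | ∀ i, (∑ j, G i j * q j) ≤ α i})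
    ∧ sSup ((fun q => sInf ((fun lam => (∑ j, r j * q j) -
            ∑ i, lam i * ((∑ j, G i j * q j) - α i)) ''
          {lam : Fin m → ℝ | (∀ i, 0 ≤ lam i) ∧ ∑ i, |lam i| ≤ L / ρ})) '' Q)
      = sSup ((fun q => ∑ j, r j * q j) ''
          {q ∈ Q | ∀ i, (∑ j, G i j * q j) ≤ α i}) := by
  haveI : Nonempty (Fin m) := ⟨⟨0, hm⟩⟩
  -- abbreviations
  set Λ : Set (Fin m → ℝ) :=
    {lam : Fin m → ℝ | (∀ i, 0 ≤ lam i) ∧ ∑ i, |lam i| ≤ L / ρ} with hΛdef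
  set F : Set (Fin n → ℝ) := {q ∈ Q | ∀ i, (∑ j, G i j * q j) ≤ α i} with hFdef
  have hLρ : 0 ≤ L / ρ := le_of_lt (div_pos hL hSlater)
  have hΛne : Λ.Nonempty := ⟨0, fun i => le_rfl, by simp [hLρ]⟩
  -- basic bounds
  have hfpos : ∀ q ∈ Q, 0 ≤ ∑ j, r j * q j := by
    intro q hq
    exact Finset.sum_nonneg fun j _ => mul_nonneg (hr j).1 (hQbox q hq j).1
  have hfL : ∀ q ∈ Q, (∑ j, r j * q j) ≤ L := by
    intro q hq
    calc (∑ j, r j * q j) ≤ ∑ j, q j := by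
          refine Finset.sum_le_sum fun j _ => ?_
          have := (hQbox q hq j).1
          nlinarith [(hr j).2]
      _ = L := hQsum q hq
  have hgpos : ∀ i, ∀ q ∈ Q, 0 ≤ ∑ j, G i j * q j := by
    intro i q hq
    exact Finset.sum_nonneg fun j _ => mul_nonneg (hG i j).1 (hQbox q hq j).1
  have hgL : ∀ i, ∀ q ∈ Q, (∑ j, G i j * q j) ≤ L := by
    intro i q hq
    calc (∑ j, G i j * q j) ≤ ∑ j, q j := by
          refine Finset.sum_le_sum fun j _ => ?_
          have := (hQbox q hq j).1
          nlinarith [(hG i j).2]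
      _ = L := hQsum q hq
  -- continuity
  have hcontf : Continuous (fun q : Fin n → ℝ => ∑ j, r j * q j) :=
    continuous_finset_sum _ fun j _ => continuous_const.mul (continuous_apply j)
  have hcontg : ∀ i, Continuous (fun q : Fin n → ℝ => ∑ j, G i j * q j) :=
    fun i => continuous_finset_sum _ fun j _ => continuous_const.mul (continuous_apply j)
  -- Slater point
  have hconth : Continuous (fun q : Fin n → ℝ => ⨅ i : Fin m, (α i - ∑ j, G i j * q j)) := by
    have heq : (fun q : Fin n → ℝ => ⨅ i : Fin m, (α i - ∑ j, G i j * q j))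
        = fun q => Finset.univ.inf' Finset.univ_nonempty
            (fun i => α i - ∑ j, G i j * q j) := by
      funext q; rw [Finset.inf'_univ_eq_ciInf]
    rw [heq]
    exact Continuous.finset_inf'_apply Finset.univ_nonempty
      fun i _ => continuous_const.sub (hcontg i)
  obtain ⟨qb, hqbQ, hqbmax⟩ := hQcpt.exists_isMaxOn hQne hconth.continuousOn
  have hρle : ρ ≤ ⨅ i : Fin m, (α i - ∑ j, G i j * qb j) := by
    rw [hρ]
    refine csSup_le (hQne.image _) ?_
    rintro y ⟨q, hq, rfl⟩
    exact hqbmax hq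
  have hqb : ∀ i, (∑ j, G i j * qb j) ≤ α i - ρ := by
    intro i
    have h := ciInf_le (Finite.bddBelow_range _) i
      (f := fun i : Fin m => α i - ∑ j, G i j * qb j)
    have := hρle.trans h
    linarith
  -- optimizer on feasible set
  have hFcpt : IsCompact F := by
    refine hQcpt.inter_right (t := {q : Fin n → ℝ | ∀ i, (∑ j, G i j * q j) ≤ α i}) ?_
    have : {q : Fin n → ℝ | ∀ i, (∑ j, G i j * q j) ≤ α i}
        = ⋂ i, {q : Fin n → ℝ | (∑ j, G i j * q j) ≤ α i} := by
      ext q; simp [Set.mem_iInter]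
    rw [this]
    exact isClosed_iInter fun i => isClosed_le (hcontg i) continuous_const
  have hqbF : qb ∈ F := ⟨hqbQ, fun i => by have := hqb i; linarith⟩
  obtain ⟨qs, hqsF, hqsmax'⟩ := hFcpt.exists_isMaxOn ⟨qb, hqbF⟩ hcontf.continuousOn
  have hqsmax : ∀ q ∈ F, (∑ j, r j * q j) ≤ ∑ j, r j * qs j := fun q hq => hqsmax' hq
  have hqsQ : qs ∈ Q := hqsF.1
  set Opt : ℝ := ∑ j, r j * qs j with hOptdef
  have hOptL : Opt ≤ L := hfL qs hqsQ
  have hOpt0 : 0 ≤ Opt := hfpos qs hqsQ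
  have hOptSup : sSup ((fun q => ∑ j, r j * q j) '' F) = Opt := by
    refine le_antisymm (csSup_le (Set.Nonempty.image _ ⟨qs, hqsF⟩) ?_)
      (le_csSup ⟨Opt, ?_⟩ ⟨qs, hqsF, rfl⟩)
    · rintro y ⟨q, hq, rfl⟩; exact hqsmax q hq
    · rintro y ⟨q, hq, rfl⟩; exact hqsmax q hq
  -- sums of lambdas
  have hlamsum : ∀ lam ∈ Λ, (∑ i, lam i) ≤ L / ρ := by
    intro lam hlam
    have : (∑ i, lam i) = ∑ i, |lam i| :=
      Finset.sum_congr rfl fun i _ => (abs_of_nonneg (hlam.1 i)).symm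
    rw [this]; exact hlam.2
  -- bound on the penalty sum
  have hpen : ∀ lam ∈ Λ, ∀ q ∈ Q,
      |∑ i, lam i * ((∑ j, G i j * q j) - α i)| ≤ (L / ρ) * L := by
    intro lam hlam q hq
    calc |∑ i, lam i * ((∑ j, G i j * q j) - α i)|
        ≤ ∑ i, |lam i * ((∑ j, G i j * q j) - α i)| := Finset.abs_sum_le_sum_abs _ _
      _ ≤ ∑ i, lam i * L := by
          refine Finset.sum_le_sum fun i _ => ?_
          rw [abs_mul, abs_of_nonneg (hlam.1 i)]
          refine mul_le_mul_of_nonneg_left ?_ (hlam.1 i)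
          rw [abs_le]
          constructor
          · have := hgpos i q hq; have := (hα i).2; linarith
          · have := hgL i q hq; have := (hα i).1; linarith
      _ = (∑ i, lam i) * L := by rw [Finset.sum_mul]
      _ ≤ (L / ρ) * L := mul_le_mul_of_nonneg_right (hlamsum lam hlam) hL.le
  -- penalty is nonpositive at feasible points
  have hpenneg : ∀ lam ∈ Λ, ∀ q ∈ F,
      (∑ i, lam i * ((∑ j, G i j * q j) - α i)) ≤ 0 := by
    intro lam hlam q hq
    refine Finset.sum_nonpos fun i _ => mul_nonpos_of_nonneg_of_nonpos (hlam.1 i) ?_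
    have := hq.2 i; linarith
  -- linearity of the sums under convex combinations
  have hsum2 : ∀ (c : Fin n → ℝ) (a b : ℝ) (q q' : Fin n → ℝ),
      (∑ j, c j * (a • q + b • q') j) = a * (∑ j, c j * q j) + b * (∑ j, c j * q' j) := by
    intro c a b q q'
    simp only [Pi.add_apply, Pi.smul_apply, smul_eq_mul]
    rw [Finset.mul_sum, Finset.mul_sum, ← Finset.sum_add_distrib]
    exact Finset.sum_congr rfl fun j _ => by ring
  -- ============ Part (i): existence of good multiplier via separation ============
  have hgoal1 : sInf ((fun lam => sSup ((fun q => (∑ j, r j * q j) -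
            ∑ i, lam i * ((∑ j, G i j * q j) - α i)) '' Q)) '' Λ) = Opt := by
    -- weak duality
    have hbddA : ∀ lam ∈ Λ, BddAbove ((fun q => (∑ j, r j * q j) -
        ∑ i, lam i * ((∑ j, G i j * q j) - α i)) '' Q) := by
      intro lam hlam
      refine ⟨L + (L / ρ) * L, ?_⟩
      rintro y ⟨q, hq, rfl⟩
      have h1 := (abs_le.mp (hpen lam hlam q hq)).1
      have h2 := hfL q hq
      show (∑ j, r j * q j) - ∑ i, lam i * ((∑ j, G i j * q j) - α i) ≤ L + (L / ρ) * L
      linarith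
    have hweak : ∀ lam ∈ Λ, Opt ≤ sSup ((fun q => (∑ j, r j * q j) -
        ∑ i, lam i * ((∑ j, G i j * q j) - α i)) '' Q) := by
      intro lam hlam
      refine le_trans ?_ (le_csSup (hbddA lam hlam) (Set.mem_image_of_mem _ hqsQ))
      show Opt ≤ (∑ j, r j * qs j) - ∑ i, lam i * ((∑ j, G i j * qs j) - α i)
      have := hpenneg lam hlam qs hqsF
      rw [hOptdef]
      linarith
    -- the two convex sets to be separated
    set C : Set ((Fin m → ℝ) × ℝ) := {p | ∃ q ∈ Q, (∀ i, (∑ j, G i j * q j) - α i ≤ p.1 i)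
        ∧ p.2 ≤ ∑ j, r j * q j} with hCdef
    set D : Set ((Fin m → ℝ) × ℝ) := {p | (∀ i, p.1 i < 0) ∧ Opt < p.2} with hDdef
    have hDopen : IsOpen D := by
      have hDeq : D = (⋂ i, (fun p : (Fin m → ℝ) × ℝ => p.1 i) ⁻¹' Set.Iio 0)
          ∩ ((fun p : (Fin m → ℝ) × ℝ => p.2) ⁻¹' Set.Ioi Opt) := by
        ext p
        simp [hDdef, Set.mem_iInter]
      rw [hDeq]
      exact IsOpen.inter (isOpen_iInter_of_finite fun i =>
        (isOpen_Iio).preimage ((continuous_apply i).comp continuous_fst))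
        ((isOpen_Ioi).preimage continuous_snd)
    have hDcvx : Convex ℝ D := by
      intro p hp p' hp' a b ha hb hab
      refine ⟨fun i => ?_, ?_⟩
      · have h1 := hp.1 i
        have h1' := hp'.1 i
        show a * p.1 i + b * p'.1 i < 0
        rcases eq_or_lt_of_le ha with h | h
        · have hb1 : b = 1 := by linarith
          rw [← h, hb1]; simpa using h1'
        · have e1 := mul_neg_of_pos_of_neg h h1
          have e2 : b * p'.1 i ≤ 0 := mul_nonpos_iff.2 (Or.inl ⟨hb, h1'.le⟩)
          linarith
      · have h2 := hp.2
        have h2' := hp'.2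
        show Opt < a * p.2 + b * p'.2
        rcases eq_or_lt_of_le ha with h | h
        · have hb1 : b = 1 := by linarith
          rw [← h, hb1]; simpa using h2'
        · have e1 := mul_lt_mul_of_pos_left h2 h
          have e2 := mul_le_mul_of_nonneg_left h2'.le hb
          have e3 : a * Opt + b * Opt = Opt := by rw [← add_mul, hab, one_mul]
          linarith
    have hCcvx : Convex ℝ C := by
      rintro p ⟨q, hq, hg1, hf1⟩ p' ⟨q', hq', hg1', hf1'⟩ a b ha hb hab
      refine ⟨a • q + b • q', hQcvx hq hq' ha hb hab, fun i => ?_, ?_⟩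
      · rw [hsum2]
        have e1 := mul_le_mul_of_nonneg_left (hg1 i) ha
        have e2 := mul_le_mul_of_nonneg_left (hg1' i) hb
        have e3 : a * α i + b * α i = α i := by rw [← add_mul, hab, one_mul]
        show a * (∑ j, G i j * q j) + b * (∑ j, G i j * q' j) - α i
            ≤ a * p.1 i + b * p'.1 i
        nlinarith [e1, e2, e3]
      · rw [hsum2]
        have e1 := mul_le_mul_of_nonneg_left hf1 ha
        have e2 := mul_le_mul_of_nonneg_left hf1' hb
        show a * p.2 + b * p'.2 ≤ a * (∑ j, r j * q j) + b * (∑ j, r j * q' j)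
        linarith
    have hdisj : Disjoint D C := by
      rw [Set.disjoint_left]
      rintro p hpD ⟨q, hq, hg1, hf1⟩
      have hqF : q ∈ F := ⟨hq, fun i => by have := hg1 i; have := hpD.1 i; linarith⟩
      have := hqsmax q hqF
      have := hpD.2
      linarith [hf1]
    obtain ⟨Φ, c, hDlt, hCge⟩ := geometric_hahn_banach_open hDcvx hDopen hCcvx hdisj
    set lam0 : Fin m → ℝ :=
      fun i => Φ (((fun j => if i = j then (1:ℝ) else 0) : Fin m → ℝ), (0:ℝ)) with hlam0def
    set μ : ℝ := Φ ((0 : Fin m → ℝ), (1:ℝ)) with hμdef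
    have hΦ : ∀ (u : Fin m → ℝ) (t : ℝ), Φ (u, t) = (∑ i, u i * lam0 i) + t * μ := by
      intro u t
      have e2 : Φ ((0 : Fin m → ℝ), t) = t * μ := by
        have h : ((0 : Fin m → ℝ), t) = t • (((0 : Fin m → ℝ), (1:ℝ)) : (Fin m → ℝ) × ℝ) := by
          rw [Prod.smul_mk]; simp
        rw [h, map_smul, smul_eq_mul, hμdef]
      have e1 : Φ (u, (0:ℝ)) = ∑ i, u i * lam0 i := by
        have hu : (u, (0:ℝ)) = ∑ i, u i •
            ((((fun j => if i = j then (1:ℝ) else 0) : Fin m → ℝ), (0:ℝ))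
              : (Fin m → ℝ) × ℝ) := by
          rw [Prod.ext_iff]
          constructor
          · rw [Prod.fst_sum]
            simp only [Prod.smul_mk]
            exact pi_eq_sum_univ u
          · rw [Prod.snd_sum]
            simp
        rw [hu, map_sum]
        refine Finset.sum_congr rfl fun i _ => ?_
        rw [map_smul, smul_eq_mul, hlam0def]
      calc Φ (u, t) = Φ ((u, (0:ℝ)) + ((0 : Fin m → ℝ), t)) := by
            rw [Prod.mk_add_mk, add_zero, zero_add]
        _ = Φ (u, (0:ℝ)) + Φ ((0 : Fin m → ℝ), t) := map_add _ _ _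
        _ = (∑ i, u i * lam0 i) + t * μ := by rw [e1, e2]
    -- the closure of D is separated as well
    have hclosD : ∀ (u : Fin m → ℝ) (t : ℝ), (∀ i, u i ≤ 0) → Opt ≤ t →
        (∑ i, u i * lam0 i) + t * μ ≤ c := by
      intro u t hu ht
      by_contra hcon
      push_neg at hcon
      have hε : ∀ ε : ℝ, 0 < ε →
          (∑ i, u i * lam0 i) + t * μ < c + ε * ((∑ i, lam0 i) - μ) := by
        intro ε hεp
        have hmem : (((fun i => u i - ε) : Fin m → ℝ), t + ε) ∈ D := by
          refine ⟨fun i => ?_, ?_⟩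
          · show u i - ε < 0
            have := hu i; linarith
          · show Opt < t + ε
            linarith
        have h := hDlt _ hmem
        rw [hΦ] at h
        have hexp : (∑ i, (u i - ε) * lam0 i) = (∑ i, u i * lam0 i) - ε * ∑ i, lam0 i := by
          rw [Finset.mul_sum, ← Finset.sum_sub_distrib]
          exact Finset.sum_congr rfl fun i _ => by ring
        rw [hexp] at h
        nlinarith [h]
      have hKd : 0 < ((∑ i, u i * lam0 i) + t * μ - c) / (|(∑ i, lam0 i) - μ| + 1) :=
        div_pos (by linarith) (by positivity)
      have h1 := hε _ hKd
      have h2 := mul_le_mul_of_nonneg_left (le_abs_self ((∑ i, lam0 i) - μ)) hKd.le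
      have h3 := mul_le_mul_of_nonneg_left
        (by linarith : |(∑ i, lam0 i) - μ| ≤ |(∑ i, lam0 i) - μ| + 1) hKd.le
      have h4 : ((∑ i, u i * lam0 i) + t * μ - c) / (|(∑ i, lam0 i) - μ| + 1)
          * (|(∑ i, lam0 i) - μ| + 1) = (∑ i, u i * lam0 i) + t * μ - c :=
        div_mul_cancel₀ _ (by positivity)
      linarith
    have hOptμc : Opt * μ ≤ c := by
      have := hclosD 0 Opt (fun i => le_rfl) le_rfl
      simpa using this
    have hlam0nn : ∀ i, 0 ≤ lam0 i := by
      intro i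
      by_contra hneg
      push_neg at hneg
      set s : ℝ := (c - Opt * μ + 1) / (-lam0 i) with hs
      have hspos : 0 < s := div_pos (by linarith) (by linarith)
      have h := hclosD (fun j => if i = j then -s else 0) Opt
        (fun j => by by_cases hij : i = j <;> simp [hij, hspos.le]) le_rfl
      have hsum : (∑ j, (if i = j then -s else 0) * lam0 j) = -s * lam0 i := by
        simp only [ite_mul, zero_mul]
        rw [Finset.sum_ite_eq]
        simp
      rw [hsum] at h
      have hcanc : s * (-lam0 i) = c - Opt * μ + 1 :=
        div_mul_cancel₀ _ (ne_of_gt (by linarith : (0:ℝ) < -lam0 i))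
      nlinarith [h, hcanc]
    have hμle : μ ≤ 0 := by
      by_contra hpos
      push_neg at hpos
      set s : ℝ := (c - Opt * μ + 1) / μ with hs
      have hspos : 0 < s := div_pos (by linarith) hpos
      have h := hclosD 0 (Opt + s) (fun i => le_rfl) (by linarith)
      simp only [Pi.zero_apply, zero_mul, Finset.sum_const_zero, zero_add] at h
      have hcanc : s * μ = c - Opt * μ + 1 := div_mul_cancel₀ _ (ne_of_gt hpos)
      nlinarith [h, hcanc]
    have hCq : ∀ q ∈ Q, c ≤ (∑ i, ((∑ j, G i j * q j) - α i) * lam0 i)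
        + (∑ j, r j * q j) * μ := by
      intro q hq
      have hmem : ((((fun i => (∑ j, G i j * q j) - α i)) : Fin m → ℝ),
          ∑ j, r j * q j) ∈ C := ⟨q, hq, fun i => le_rfl, le_rfl⟩
      have h := hCge _ hmem
      rw [hΦ] at h
      exact h
    have hμlt : μ < 0 := by
      rcases lt_or_eq_of_le hμle with h | h
      · exact h
      · exfalso
        have hc0 : 0 ≤ c := by
          have := hOptμc; rw [h, mul_zero] at this; exact this
        have h1 := hCq qb hqbQ
        rw [h, mul_zero, add_zero] at h1
        have h2 : (∑ i, ((∑ j, G i j * qb j) - α i) * lam0 i) ≤ ∑ i, (-ρ) * lam0 i :=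
          Finset.sum_le_sum fun i _ =>
            mul_le_mul_of_nonneg_right (by have := hqb i; linarith) (hlam0nn i)
        have h3 : (∑ i, (-ρ) * lam0 i) = -(ρ * ∑ i, lam0 i) := by
          rw [← Finset.mul_sum]; ring
        have hSnn : 0 ≤ ∑ i, lam0 i := Finset.sum_nonneg fun i _ => hlam0nn i
        have hρS : ρ * (∑ i, lam0 i) ≤ 0 := by linarith
        have hS0 : (∑ i, lam0 i) = 0 := by
          rcases eq_or_lt_of_le hSnn with hEq | hlt0
          · exact hEq.symm
          · exact absurd hρS (not_le.2 (mul_pos hSlater hlt0))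
        have hall0 : ∀ i, lam0 i = 0 := fun i =>
          (Finset.sum_eq_zero_iff_of_nonneg fun i _ => hlam0nn i).mp hS0 i (Finset.mem_univ i)
        have hmemD : (((fun _ => (-1:ℝ)) : Fin m → ℝ), Opt + 1) ∈ D := by
          refine ⟨fun i => ?_, ?_⟩
          · show (-1:ℝ) < 0
            norm_num
          · show Opt < Opt + 1
            linarith
        have hlt := hDlt _ hmemD
        rw [hΦ] at hlt
        simp only [hall0, mul_zero, Finset.sum_const_zero, h, add_zero, zero_add] at hlt
        have hzero : (∑ i, ((∑ j, G i j * qb j) - α i) * lam0 i) = 0 :=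
          Finset.sum_eq_zero fun i _ => by rw [hall0 i, mul_zero]
        have hc0' : c ≤ 0 := by linarith
        linarith
    have hμneg : 0 < -μ := by linarith
    have hLagOpt : ∀ q ∈ Q, (∑ j, r j * q j)
        - (∑ i, (lam0 i / (-μ)) * ((∑ j, G i j * q j) - α i)) ≤ Opt := by
      intro q hq
      have h1 := hCq q hq
      have h2 := hOptμc
      have key : ((∑ j, r j * q j)
          - ∑ i, (lam0 i / (-μ)) * ((∑ j, G i j * q j) - α i)) * (-μ) ≤ Opt * (-μ) := by
        have hexp : (∑ i, (lam0 i / (-μ)) * ((∑ j, G i j * q j) - α i)) * (-μ)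
            = ∑ i, ((∑ j, G i j * q j) - α i) * lam0 i := by
          rw [Finset.sum_mul]
          refine Finset.sum_congr rfl fun i _ => ?_
          have hμne : μ ≠ 0 := ne_of_lt hμlt
          field_simp
        rw [sub_mul, hexp]
        nlinarith [h1, h2]
      exact le_of_mul_le_mul_right key hμneg
    have hlamhΛ : (fun i => lam0 i / (-μ)) ∈ Λ := by
      constructor
      · intro i; exact div_nonneg (hlam0nn i) hμneg.le
      · have habs : ∀ i : Fin m, |lam0 i / (-μ)| = lam0 i / (-μ) :=
          fun i => abs_of_nonneg (div_nonneg (hlam0nn i) hμneg.le)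
        rw [Finset.sum_congr rfl fun i _ => habs i]
        have hqbineq := hLagOpt qb hqbQ
        have h3 : (∑ i, (lam0 i / (-μ)) * ((∑ j, G i j * qb j) - α i))
            ≤ ∑ i, (lam0 i / (-μ)) * (-ρ) :=
          Finset.sum_le_sum fun i _ =>
            mul_le_mul_of_nonneg_left (by have := hqb i; linarith)
              (div_nonneg (hlam0nn i) hμneg.le)
        have h4 : (∑ i, (lam0 i / (-μ)) * (-ρ)) = -(ρ * ∑ i, lam0 i / (-μ)) := by
          rw [← Finset.sum_mul]; ring
        have h5 := hfpos qb hqbQ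
        have h1 : ρ * (∑ i, lam0 i / (-μ)) ≤ Opt := by linarith
        rw [le_div_iff₀ hSlater]
        nlinarith [h1, hOptL]
    refine le_antisymm ?_ (le_csInf (hΛne.image _) ?_)
    · have hφle : sSup ((fun q => (∑ j, r j * q j) -
          ∑ i, (lam0 i / (-μ)) * ((∑ j, G i j * q j) - α i)) '' Q) ≤ Opt :=
        csSup_le (hQne.image _) (by rintro y ⟨q, hq, rfl⟩; exact hLagOpt q hq)
      have hbdd : BddBelow ((fun lam => sSup ((fun q => (∑ j, r j * q j) -
          ∑ i, lam i * ((∑ j, G i j * q j) - α i)) '' Q)) '' Λ) := by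
        refine ⟨Opt, ?_⟩
        rintro y ⟨lam, hlam, rfl⟩
        exact hweak lam hlam
      exact (csInf_le hbdd (Set.mem_image_of_mem _ hlamhΛ)).trans hφle
    · rintro y ⟨lam, hlam, rfl⟩
      exact hweak lam hlam
  have hbddB : ∀ q ∈ Q, BddBelow ((fun lam => (∑ j, r j * q j) -
      ∑ i, lam i * ((∑ j, G i j * q j) - α i)) '' Λ) := by
    intro q hq
    refine ⟨-((L / ρ) * L), ?_⟩
    rintro y ⟨lam, hlam, rfl⟩
    have h1 := (abs_le.mp (hpen lam hlam q hq)).2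
    have h2 := hfpos q hq
    show -((L / ρ) * L) ≤ (∑ j, r j * q j) - ∑ i, lam i * ((∑ j, G i j * q j) - α i)
    linarith
  have h0Λ : (0 : Fin m → ℝ) ∈ Λ := ⟨fun i => le_rfl, by simp [hLρ]⟩
  have hψle : ∀ q ∈ Q, sInf ((fun lam => (∑ j, r j * q j) -
      ∑ i, lam i * ((∑ j, G i j * q j) - α i)) '' Λ) ≤ Opt := by
    intro q hq
    by_cases hfeas : ∀ i, (∑ j, G i j * q j) ≤ α i
    · have hmem : (∑ j, r j * q j) ∈ ((fun lam => (∑ j, r j * q j) -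
          ∑ i, lam i * ((∑ j, G i j * q j) - α i)) '' Λ) :=
        ⟨0, h0Λ, by simp⟩
      exact (csInf_le (hbddB q hq) hmem).trans (hqsmax q ⟨hq, hfeas⟩)
    · push_neg at hfeas
      obtain ⟨i1, hi1⟩ := hfeas
      obtain ⟨i0, -, hi0max⟩ := Finset.exists_max_image Finset.univ
        (fun i => (∑ j, G i j * q j) - α i) Finset.univ_nonempty
      set v : ℝ := (∑ j, G i0 j * q j) - α i0 with hvdef
      have hvmax : ∀ i, (∑ j, G i j * q j) - α i ≤ v := fun i => hi0max i (Finset.mem_univ i)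
      have hv : 0 < v := lt_of_lt_of_le (by linarith) (hvmax i1)
      have hlmΛ : (fun i => if i0 = i then L / ρ else 0) ∈ Λ := by
        constructor
        · intro i; by_cases h : i0 = i <;> simp [h, hLρ]
        · have habs : ∀ i : Fin m, |if i0 = i then L / ρ else 0|
              = if i0 = i then L / ρ else 0 := by
            intro i; by_cases h : i0 = i <;> simp [h, hLρ, abs_of_nonneg]
          rw [Finset.sum_congr rfl fun i _ => habs i, Finset.sum_ite_eq]
          simp
      have hlmval : (∑ i, (if i0 = i then L / ρ else 0) * ((∑ j, G i j * q j) - α i))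
          = (L / ρ) * v := by
        simp only [ite_mul, zero_mul]
        rw [Finset.sum_ite_eq]
        simp [hvdef]
      have hmem : ((∑ j, r j * q j) - (L / ρ) * v) ∈ ((fun lam => (∑ j, r j * q j) -
          ∑ i, lam i * ((∑ j, G i j * q j) - α i)) '' Λ) :=
        ⟨_, hlmΛ, by rw [← hlmval]⟩
      have hstep1 := csInf_le (hbddB q hq) hmem
      -- mixing with the Slater point
      set t : ℝ := v / (v + ρ) with htdef
      have hvρ : 0 < v + ρ := by linarith
      have ht0 : 0 ≤ t := le_of_lt (div_pos hv hvρ)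
      have ht1 : t ≤ 1 := by rw [htdef, div_le_one hvρ]; linarith
      have hkey : (1 - t) * v = t * ρ := by
        rw [htdef]; field_simp; ring
      set qt := (1 - t) • q + t • qb with hqtdef
      have hqtQ : qt ∈ Q := hQcvx hq hqbQ (by linarith) ht0 (by ring)
      have hqtF : qt ∈ F := by
        refine ⟨hqtQ, fun i => ?_⟩
        rw [hqtdef, hsum2]
        have h1 : (∑ j, G i j * q j) ≤ α i + v := by have := hvmax i; linarith
        have h2 : (∑ j, G i j * qb j) ≤ α i - ρ := hqb i
        have e1 := mul_le_mul_of_nonneg_left h1 (by linarith : (0:ℝ) ≤ 1 - t)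
        have e2 := mul_le_mul_of_nonneg_left h2 ht0
        nlinarith [hkey]
      have hft : (∑ j, r j * qt j) ≤ Opt := hqsmax qt hqtF
      have hlin : (∑ j, r j * qt j)
          = (1 - t) * (∑ j, r j * q j) + t * (∑ j, r j * qb j) := by
        rw [hqtdef]; exact hsum2 r _ _ _ _
      have htρv : t * ρ ≤ v := by nlinarith [hkey, mul_nonneg ht0 hv.le]
      have h5 : t * L ≤ (L / ρ) * v := by
        show v / (v + ρ) * L ≤ L / ρ * v
        rw [div_mul_eq_mul_div, div_mul_eq_mul_div, div_le_div_iff₀ hvρ hSlater]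
        nlinarith [mul_nonneg (mul_nonneg hL.le hv.le) hv.le]
      have h6 : t * (∑ j, r j * q j) ≤ t * L := mul_le_mul_of_nonneg_left (hfL q hq) ht0
      have h7 : 0 ≤ t * (∑ j, r j * qb j) := mul_nonneg ht0 (hfpos qb hqbQ)
      have hfq : (∑ j, r j * q j) ≤ Opt + (L / ρ) * v := by linarith
      linarith
  have hgoal2 : sSup ((fun q => sInf ((fun lam => (∑ j, r j * q j) -
            ∑ i, lam i * ((∑ j, G i j * q j) - α i)) '' Λ)) '' Q) = Opt := by
    refine le_antisymm (csSup_le (hQne.image _) ?_) ?_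
    · rintro y ⟨q, hq, rfl⟩; exact hψle q hq
    · have h1 : Opt ≤ sInf ((fun lam => (∑ j, r j * qs j) -
          ∑ i, lam i * ((∑ j, G i j * qs j) - α i)) '' Λ) := by
        refine le_csInf (hΛne.image _) ?_
        rintro y ⟨lam, hlam, rfl⟩
        have := hpenneg lam hlam qs hqsF
        show Opt ≤ (∑ j, r j * qs j) - ∑ i, lam i * ((∑ j, G i j * qs j) - α i)
        rw [hOptdef]
        linarith
      refine h1.trans (le_csSup ⟨Opt, ?_⟩ (Set.mem_image_of_mem _ hqsQ))
      rintro y ⟨q, hq, rfl⟩; exact hψle q hq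
  rw [hOptSup]
  exact ⟨hgoal1, hgoal2⟩
end

section
/- Under Slater's condition (ρ > 0), restricting the Lagrange multipliers to the ℓ₁-ball of radius L/ρ does not change the dual value: inf over λ ∈ ℝ^m with λ ≥ 0 of max over q ∈ Q of ( r·q − Σ_{i=1}^m λ_i (G_i·q − α_i) ) equals min over λ ∈ ℝ^m with λ ≥ 0 and ‖λ‖₁ ≤ L/ρ of max over q ∈ Q of ( r·q − Σ_{i=1}^m λ_i (G_i·q − α_i) ). Moreover, for every λ ≥ 0 with ‖λ‖₁ > L/ρ one has max_{q∈Q} ( r·q − Σ_i λ_i (G_i·q − α_i) ) > L, while the restricted minimum is at most L. -/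
/-!
At a point `q⋆ ∈ Q` attaining `ρ` every constraint has slack at least `ρ`, so for `λ ≥ 0` the
Lagrangian at `q⋆` is at least `r·q⋆ + ρ‖λ‖₁ ≥ ρ‖λ‖₁`. Hence the dual function exceeds `L` outside
the ball of radius `L/ρ`, whereas at `λ = 0`, which lies in the ball, it equals
`max_{q ∈ Q} r·q ≤ Σ_j q_j = L`. Multipliers outside the ball therefore never lower the infimum.
-/

open Finset

theorem continuous_iInf_of_fintype {ι X L : Type*} [Fintype ι] [TopologicalSpace X]
    [ConditionallyCompleteLattice L] [TopologicalSpace L] [ContinuousInf L]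
    {f : ι → X → L} (hf : ∀ i, Continuous (f i)) : Continuous fun x => ⨅ i, f i x := by
  cases isEmpty_or_nonempty ι
  · simp only [iInf, Set.range_eq_empty]
    exact continuous_const
  · simp only [← inf'_univ_eq_ciInf]
    exact Continuous.finset_inf'_apply univ_nonempty fun i _ => hf i

theorem IsCompact.exists_forall_sSup_iInf_le {ι X : Type*} [Fintype ι] [TopologicalSpace X]
    {Q : Set X} (hQ : IsCompact Q) (hne : Q.Nonempty) {g : ι → X → ℝ}
    (hg : ∀ i, Continuous (g i)) :
    ∃ q ∈ Q, ∀ i, sSup ((fun x => ⨅ i, g i x) '' Q) ≤ g i q := by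
  obtain ⟨q, hq, hmax⟩ :=
    (hQ.image (continuous_iInf_of_fintype hg)).sSup_mem (hne.image _)
  exact ⟨q, hq, fun i => hmax ▸ ciInf_le (Set.finite_range _).bddBelow i⟩

theorem csInf_image_eq_of_subset_of_forall_notMem {β γ : Type*} [ConditionallyCompleteLattice γ]
    {F : β → γ} {S T : Set β} (hST : S ⊆ T) (hS : S.Nonempty) (hT : BddBelow (F '' T))
    (hle : ∀ x ∈ T, x ∉ S → sInf (F '' S) ≤ F x) :
    sInf (F '' T) = sInf (F '' S) := by
  have hST' : F '' S ⊆ F '' T := Set.image_mono hST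
  refine le_antisymm (csInf_le_csInf hT (hS.image F) hST') ?_
  refine le_csInf ((hS.image F).mono hST') ?_
  rintro _ ⟨x, hx, rfl⟩
  by_cases hxS : x ∈ S
  · exact csInf_le (hT.mono hST') ⟨x, hxS, rfl⟩
  · exact hle x hx hxS

section Lagrangian

variable {ι κ : Type*} [Fintype ι] [Fintype κ] (r : κ → ℝ) (G : ι → κ → ℝ) (α : ι → ℝ)

def lagrangian (lam : ι → ℝ) (q : κ → ℝ) : ℝ :=
  (∑ j, r j * q j) - ∑ i, lam i * ((∑ j, G i j * q j) - α i)

noncomputable def dualFunction (Q : Set (κ → ℝ)) (lam : ι → ℝ) : ℝ :=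
  sSup (lagrangian r G α lam '' Q)

theorem continuous_lagrangian (lam : ι → ℝ) : Continuous (lagrangian r G α lam) := by
  unfold lagrangian
  fun_prop

theorem lagrangian_zero (q : κ → ℝ) : lagrangian r G α 0 q = ∑ j, r j * q j := by
  simp [lagrangian]

variable {r G α}

theorem add_mul_sum_le_lagrangian {ρ : ℝ} {lam : ι → ℝ} {q : κ → ℝ} (hlam : ∀ i, 0 ≤ lam i)
    (hq : ∀ i, ρ ≤ α i - ∑ j, G i j * q j) :
    (∑ j, r j * q j) + ρ * ∑ i, lam i ≤ lagrangian r G α lam q := by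
  have hpen : ∑ i, lam i * ((∑ j, G i j * q j) - α i) ≤ ∑ i, lam i * (-ρ) :=
    sum_le_sum fun i _ => mul_le_mul_of_nonneg_left (by linarith [hq i]) (hlam i)
  rw [← sum_mul] at hpen
  unfold lagrangian
  linarith

theorem mul_sum_le_dualFunction {Q : Set (κ → ℝ)} {ρ : ℝ} {lam : ι → ℝ} {q : κ → ℝ}
    (hQ : IsCompact Q) (hqQ : q ∈ Q) (hrq : 0 ≤ ∑ j, r j * q j) (hlam : ∀ i, 0 ≤ lam i)
    (hq : ∀ i, ρ ≤ α i - ∑ j, G i j * q j) :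
    ρ * ∑ i, lam i ≤ dualFunction r G α Q lam := by
  have hsup : lagrangian r G α lam q ≤ dualFunction r G α Q lam :=
    le_csSup (hQ.image (continuous_lagrangian r G α lam)).bddAbove ⟨q, hqQ, rfl⟩
  linarith [add_mul_sum_le_lagrangian (r := r) hlam hq]

theorem dualFunction_zero_le {Q : Set (κ → ℝ)} {L : ℝ} (hne : Q.Nonempty)
    (h : ∀ q ∈ Q, ∑ j, r j * q j ≤ L) : dualFunction r G α Q 0 ≤ L := by
  refine csSup_le (hne.image _) ?_
  rintro _ ⟨q, hq, rfl⟩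
  rw [lagrangian_zero]
  exact h q hq

end Lagrangian

theorem multipliers_ball_restriction_general
    (n m : ℕ) (L : ℝ) (hL : 0 < L)
    (Q : Set (Fin n → ℝ)) (hQne : Q.Nonempty) (hQcpt : IsCompact Q)
    (hQbox : ∀ q ∈ Q, ∀ j, q j ∈ Set.Icc (0 : ℝ) 1)
    (hQsum : ∀ q ∈ Q, ∑ j, q j = L)
    (r : Fin n → ℝ) (hr : ∀ j, r j ∈ Set.Icc (0 : ℝ) 1)
    (G : Fin m → Fin n → ℝ)
    (α : Fin m → ℝ)
    (ρ : ℝ) (hρ : ρ = sSup ((fun q => ⨅ i : Fin m, (α i - ∑ j, G i j * q j)) '' Q))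
    (hSlater : 0 < ρ) :
    sInf ((fun lam => sSup ((fun q => (∑ j, r j * q j) -
            ∑ i, lam i * ((∑ j, G i j * q j) - α i)) '' Q)) ''
          {lam : Fin m → ℝ | ∀ i, 0 ≤ lam i})
      = sInf ((fun lam => sSup ((fun q => (∑ j, r j * q j) -
            ∑ i, lam i * ((∑ j, G i j * q j) - α i)) '' Q)) ''
          {lam : Fin m → ℝ | (∀ i, 0 ≤ lam i) ∧ ∑ i, |lam i| ≤ L / ρ})
    ∧ (∀ lam : Fin m → ℝ, (∀ i, 0 ≤ lam i) → L / ρ < ∑ i, |lam i| →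
        L < sSup ((fun q => (∑ j, r j * q j) -
            ∑ i, lam i * ((∑ j, G i j * q j) - α i)) '' Q))
    ∧ sInf ((fun lam => sSup ((fun q => (∑ j, r j * q j) -
            ∑ i, lam i * ((∑ j, G i j * q j) - α i)) '' Q)) ''
          {lam : Fin m → ℝ | (∀ i, 0 ≤ lam i) ∧ ∑ i, |lam i| ≤ L / ρ}) ≤ L := by
  obtain ⟨qs, hqsQ, hqs⟩ := hQcpt.exists_forall_sSup_iInf_le hQne
    (g := fun i q => α i - ∑ j, G i j * q j) (by fun_prop)
  rw [← hρ] at hqs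
  have hrq0 : ∀ q ∈ Q, 0 ≤ ∑ j, r j * q j := fun q hq =>
    sum_nonneg fun j _ => mul_nonneg (hr j).1 (hQbox q hq j).1
  have hrqL : ∀ q ∈ Q, ∑ j, r j * q j ≤ L := fun q hq =>
    hQsum q hq ▸ sum_le_sum fun j _ => mul_le_of_le_one_left (hQbox q hq j).1 (hr j).2
  have hlow : ∀ lam : Fin m → ℝ, (∀ i, 0 ≤ lam i) → ρ * ∑ i, lam i ≤ dualFunction r G α Q lam :=
    fun lam hlam => mul_sum_le_dualFunction hQcpt hqsQ (hrq0 qs hqsQ) hlam hqs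
  have hout : ∀ lam : Fin m → ℝ, (∀ i, 0 ≤ lam i) → L / ρ < ∑ i, |lam i| →
      L < dualFunction r G α Q lam := by
    intro lam hlam hbig
    rw [sum_congr rfl fun i _ => abs_of_nonneg (hlam i), div_lt_iff₀' hSlater] at hbig
    exact hbig.trans_le (hlow lam hlam)
  have hzero : (0 : Fin m → ℝ) ∈ {lam : Fin m → ℝ | (∀ i, 0 ≤ lam i) ∧ ∑ i, |lam i| ≤ L / ρ} :=
    ⟨fun _ => le_rfl, by simpa using by positivity⟩
  have hbdd : BddBelow (dualFunction r G α Q '' {lam : Fin m → ℝ | ∀ i, 0 ≤ lam i}) := by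
    refine ⟨0, ?_⟩
    rintro _ ⟨lam, hlam, rfl⟩
    exact (mul_nonneg hSlater.le (sum_nonneg fun i _ => hlam i)).trans (hlow lam hlam)
  have hball : sInf (dualFunction r G α Q ''
      {lam : Fin m → ℝ | (∀ i, 0 ≤ lam i) ∧ ∑ i, |lam i| ≤ L / ρ}) ≤ L :=
    (csInf_le (hbdd.mono (Set.image_mono fun _ h => h.1)) ⟨0, hzero, rfl⟩).trans
      (dualFunction_zero_le hQne hrqL)
  refine ⟨csInf_image_eq_of_subset_of_forall_notMem (fun _ h => h.1) ⟨0, hzero⟩ hbdd ?_, hout, hball⟩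
  exact fun lam hlam hnot => hball.trans (hout lam hlam (lt_of_not_ge fun h => hnot ⟨hlam, h⟩)).le

theorem multipliers_ball_restriction
    (n m : ℕ) (hn : 1 ≤ n) (hm : 1 ≤ m) (L : ℝ) (hL : 0 < L)
    (Q : Set (Fin n → ℝ)) (hQne : Q.Nonempty) (hQcpt : IsCompact Q)
    (hQcvx : Convex ℝ Q) (hQbox : ∀ q ∈ Q, ∀ j, q j ∈ Set.Icc (0 : ℝ) 1)
    (hQsum : ∀ q ∈ Q, ∑ j, q j = L)
    (r : Fin n → ℝ) (hr : ∀ j, r j ∈ Set.Icc (0 : ℝ) 1)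
    (G : Fin m → Fin n → ℝ) (hG : ∀ i j, G i j ∈ Set.Icc (0 : ℝ) 1)
    (α : Fin m → ℝ) (hα : ∀ i, α i ∈ Set.Icc (0 : ℝ) L)
    (ρ : ℝ) (hρ : ρ = sSup ((fun q => ⨅ i : Fin m, (α i - ∑ j, G i j * q j)) '' Q))
    (hSlater : 0 < ρ) :
    sInf ((fun lam => sSup ((fun q => (∑ j, r j * q j) -
            ∑ i, lam i * ((∑ j, G i j * q j) - α i)) '' Q)) ''
          {lam : Fin m → ℝ | ∀ i, 0 ≤ lam i})
      = sInf ((fun lam => sSup ((fun q => (∑ j, r j * q j) -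
            ∑ i, lam i * ((∑ j, G i j * q j) - α i)) '' Q)) ''
          {lam : Fin m → ℝ | (∀ i, 0 ≤ lam i) ∧ ∑ i, |lam i| ≤ L / ρ})
    ∧ (∀ lam : Fin m → ℝ, (∀ i, 0 ≤ lam i) → L / ρ < ∑ i, |lam i| →
        L < sSup ((fun q => (∑ j, r j * q j) -
            ∑ i, lam i * ((∑ j, G i j * q j) - α i)) '' Q))
    ∧ sInf ((fun lam => sSup ((fun q => (∑ j, r j * q j) -
            ∑ i, lam i * ((∑ j, G i j * q j) - α i)) '' Q)) ''
          {lam : Fin m → ℝ | (∀ i, 0 ≤ lam i) ∧ ∑ i, |lam i| ≤ L / ρ}) ≤ L :=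
  multipliers_ball_restriction_general n m L hL Q hQne hQcpt hQbox hQsum r hr G α ρ hρ hSlater
end

section
/- (Strong duality for the positive Lagrangian.) Under Slater's condition (ρ > 0): max over q ∈ Q of ( r·q − (L/ρ)·Σ_{i=1}^m [G_i·q − α_i]^+ ) = OPT, where [z]^+ := max{z, 0}. -/
/-!
Statement 6 (Strong duality for the positive Lagrangian).
Under Slater's condition `ρ > 0`:
`max_{q ∈ Q} (r·q − (L/ρ) Σ_i [G_i·q − α_i]^+) = OPT`.
-/

open Finset

theorem positive_lagrangian_strong_duality
    (n m : ℕ) (hn : 1 ≤ n) (hm : 1 ≤ m) (L : ℝ) (hL : 0 < L)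
    (Q : Set (Fin n → ℝ)) (hQne : Q.Nonempty) (hQcpt : IsCompact Q)
    (hQcvx : Convex ℝ Q) (hQbox : ∀ q ∈ Q, ∀ j, q j ∈ Set.Icc (0 : ℝ) 1)
    (hQsum : ∀ q ∈ Q, ∑ j, q j = L)
    (r : Fin n → ℝ) (hr : ∀ j, r j ∈ Set.Icc (0 : ℝ) 1)
    (G : Fin m → Fin n → ℝ) (hG : ∀ i j, G i j ∈ Set.Icc (0 : ℝ) 1)
    (α : Fin m → ℝ) (hα : ∀ i, α i ∈ Set.Icc (0 : ℝ) L)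
    (ρ : ℝ) (hρ : ρ = sSup ((fun q => ⨅ i : Fin m, (α i - ∑ j, G i j * q j)) '' Q))
    (hSlater : 0 < ρ) :
    sSup ((fun q => (∑ j, r j * q j) -
          (L / ρ) * ∑ i, max ((∑ j, G i j * q j) - α i) 0) '' Q)
      = sSup ((fun q => ∑ j, r j * q j) ''
          {q ∈ Q | ∀ i, (∑ j, G i j * q j) ≤ α i}) := by
  haveI : Nonempty (Fin m) := ⟨⟨0, hm⟩⟩
  set g : (Fin n → ℝ) → ℝ := fun q => ⨅ i : Fin m, (α i - ∑ j, G i j * q j) with hg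
  set f : (Fin n → ℝ) → ℝ := fun q => (∑ j, r j * q j) -
      (L / ρ) * ∑ i, max ((∑ j, G i j * q j) - α i) 0 with hf
  set F : Set (Fin n → ℝ) := {q ∈ Q | ∀ i, (∑ j, G i j * q j) ≤ α i} with hF
  -- basic bounds on the linear objective
  have hdot_nonneg : ∀ q ∈ Q, 0 ≤ ∑ j, r j * q j := fun q hq =>
    Finset.sum_nonneg fun j _ => mul_nonneg (hr j).1 (hQbox q hq j).1
  have hdot_le : ∀ q ∈ Q, ∑ j, r j * q j ≤ L := by
    intro q hq
    calc ∑ j, r j * q j ≤ ∑ j, q j := by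
          refine Finset.sum_le_sum fun j _ => ?_
          have h1 := (hQbox q hq j).1
          have h2 := (hr j).2
          nlinarith [(hr j).1]
      _ = L := hQsum q hq
  have hpen_nonneg : ∀ q : Fin n → ℝ, 0 ≤ ∑ i, max ((∑ j, G i j * q j) - α i) 0 :=
    fun q => Finset.sum_nonneg fun i _ => le_max_right _ _
  have hLρ : 0 ≤ L / ρ := div_nonneg hL.le hSlater.le
  -- a maximizer of g on Q
  have hgcont : ContinuousOn g Q := by
    have hco : Continuous g := by
      have h1 : Continuous (fun q : Fin n → ℝ =>
          (univ : Finset (Fin m)).inf' univ_nonempty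
            (fun i => α i - ∑ j, G i j * q j)) := by
        apply Continuous.finset_inf'_apply
        intro i _
        exact continuous_const.sub (continuous_finset_sum _ fun j _ =>
          (continuous_const.mul (continuous_apply j)))
      have : g = fun q : Fin n → ℝ => (univ : Finset (Fin m)).inf' univ_nonempty
          (fun i => α i - ∑ j, G i j * q j) := by
        funext q
        exact (Finset.inf'_univ_eq_ciInf _).symm
      rw [this]; exact h1
    exact hco.continuousOn
  obtain ⟨qb, hqbQ, hqbmax⟩ := hQcpt.exists_isMaxOn hQne hgcont
  have hρ_le : ρ ≤ g qb := by
    rw [hρ]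
    exact csSup_le (hQne.image _) (by rintro y ⟨q, hq, rfl⟩; exact hqbmax hq)
  have hqb_slack : ∀ i, (∑ j, G i j * qb j) ≤ α i - ρ := by
    intro i
    have h1 : g qb ≤ α i - ∑ j, G i j * qb j :=
      ciInf_le (Finite.bddBelow_range _) i
    linarith [hρ_le.trans h1]
  have hqbF : qb ∈ F := ⟨hqbQ, fun i => by linarith [hqb_slack i, hSlater]⟩
  have hFne : F.Nonempty := ⟨qb, hqbF⟩
  -- boundedness
  have hbddF : BddAbove ((fun q => ∑ j, r j * q j) '' F) := by
    refine ⟨L, ?_⟩; rintro y ⟨q, hq, rfl⟩; exact hdot_le q hq.1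
  have hbddf : BddAbove (f '' Q) := by
    refine ⟨L, ?_⟩; rintro y ⟨q, hq, rfl⟩
    have := hpen_nonneg q
    have := hdot_le q hq
    simp only [hf]
    nlinarith
  apply le_antisymm
  · -- sSup (f '' Q) ≤ OPT
    refine csSup_le (hQne.image _) ?_
    rintro y ⟨q, hq, rfl⟩
    set S : ℝ := ∑ i, max ((∑ j, G i j * q j) - α i) 0 with hS
    have hS0 : 0 ≤ S := hpen_nonneg q
    have hSρ : 0 < S + ρ := by linarith
    set lam : ℝ := S / (S + ρ) with hlam
    have hlam0 : 0 ≤ lam := div_nonneg hS0 hSρ.le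
    have hlam1 : 1 - lam = ρ / (S + ρ) := by
      rw [hlam, eq_div_iff hSρ.ne', sub_mul, div_mul_cancel₀ _ hSρ.ne']; ring
    have hlam1' : 0 ≤ 1 - lam := by rw [hlam1]; positivity
    have hsum1 : (1 - lam) + lam = 1 := by ring
    set q' : Fin n → ℝ := (1 - lam) • q + lam • qb with hq'
    have hq'Q : q' ∈ Q := hQcvx hq hqbQ hlam1' hlam0 hsum1
    have hq'lin : ∀ (c : Fin n → ℝ), (∑ j, c j * q' j) =
        (1 - lam) * (∑ j, c j * q j) + lam * (∑ j, c j * qb j) := by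
      intro c
      rw [Finset.mul_sum, Finset.mul_sum, ← Finset.sum_add_distrib]
      refine Finset.sum_congr rfl fun j _ => ?_
      simp only [hq', Pi.add_apply, Pi.smul_apply, smul_eq_mul]
      ring
    have hkey : (1 - lam) * S = lam * ρ := by
      rw [hlam1, hlam]; field_simp
    have hq'F : q' ∈ F := by
      refine ⟨hq'Q, fun i => ?_⟩
      have hviol : (∑ j, G i j * q j) ≤ α i + S := by
        have h1 : (∑ j, G i j * q j) - α i ≤ max ((∑ j, G i j * q j) - α i) 0 :=
          le_max_left _ _
        have h2 : max ((∑ j, G i j * q j) - α i) 0 ≤ S := by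
          exact Finset.single_le_sum
            (f := fun i => max ((∑ j, G i j * q j) - α i) 0)
            (fun i _ => le_max_right _ _) (Finset.mem_univ i)
        linarith
      have hqb_i := hqb_slack i
      rw [hq'lin (G i)]
      have b1 : (1 - lam) * (∑ j, G i j * q j) ≤ (1 - lam) * (α i + S) :=
        mul_le_mul_of_nonneg_left hviol hlam1'
      have b2 : lam * (∑ j, G i j * qb j) ≤ lam * (α i - ρ) :=
        mul_le_mul_of_nonneg_left hqb_i hlam0
      nlinarith [hkey]
    have hle_opt : (∑ j, r j * q' j) ≤ sSup ((fun q => ∑ j, r j * q j) '' F) :=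
      le_csSup hbddF ⟨q', hq'F, rfl⟩
    have hrq' : (∑ j, r j * q' j) = (1 - lam) * (∑ j, r j * q j) + lam * (∑ j, r j * qb j) :=
      hq'lin r
    have h1 : (∑ j, r j * q j) ≤ (∑ j, r j * q' j) + lam * L := by
      have hb0 := hdot_nonneg qb hqbQ
      have hqL := hdot_le q hq
      nlinarith
    have h2 : lam * L ≤ (L / ρ) * S := by
      have e1 : lam * L = S * L / (S + ρ) := by rw [hlam]; ring
      have e2 : (L / ρ) * S = L * S / ρ := by ring
      rw [e1, e2, div_le_div_iff₀ hSρ hSlater]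
      nlinarith [mul_nonneg (mul_nonneg hL.le hS0) hS0]
    simp only [hf]
    linarith
  · -- OPT ≤ sSup (f '' Q)
    refine csSup_le (hFne.image _) ?_
    rintro y ⟨q, ⟨hqQ, hqfeas⟩, rfl⟩
    have hpen0 : (∑ i, max ((∑ j, G i j * q j) - α i) 0) = 0 := by
      refine Finset.sum_eq_zero fun i _ => ?_
      exact max_eq_right (by linarith [hqfeas i])
    have : f q = ∑ j, r j * q j := by
      simp only [hf, hpen0, mul_zero, sub_zero]
    calc (∑ j, r j * q j) = f q := this.symm
      _ ≤ sSup (f '' Q) := le_csSup hbddf ⟨q, hqQ, rfl⟩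
end

section
/- (Confidence interval around the average of the means.) With probability at least 1 − δ: | (1/N)·Σ_{τ∈S} g_τ − (1/T)·Σ_{τ=1}^T μ_τ | ≤ √( ln(2/δ) / (2N) ) + C/N + C/T. -/
/-!
Statement 9 (Confidence interval around the average of the means).
With probability at least `1 − δ`:
`|(1/N) Σ_{τ ∈ S} g_τ − (1/T) Σ_{τ=1}^T μ_τ| ≤ √(ln(2/δ) / (2N)) + C/N + C/T`.
-/

open MeasureTheory ProbabilityTheory Finset



lemma hoeffding_core (p : ℝ) (hp : 0 ≤ p) (hp1 : p ≤ 1) (h : ℝ) :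
    (1 - p) + p * Real.exp h ≤ Real.exp (p * h + h ^ 2 / 8) := by
  set φ : ℝ → ℝ := fun x => (1 - p) + p * Real.exp x with hφdef
  have hφpos : ∀ x, 0 < φ x := by
    intro x
    rcases eq_or_lt_of_le hp with h0 | h0
    · simp [hφdef, ← h0]
    · have : 0 < p * Real.exp x := mul_pos h0 (Real.exp_pos x)
      have : (0:ℝ) ≤ 1 - p := by linarith
      simp only [hφdef]; positivity
  have hφ' : ∀ x, HasDerivAt φ (p * Real.exp x) x := fun x =>
    ((Real.hasDerivAt_exp x).const_mul p).const_add (1 - p)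
  set F : ℝ → ℝ := fun x => p * x + x ^ 2 / 8 - Real.log (φ x) with hFdef
  set G : ℝ → ℝ := fun x => p + x / 4 - p * Real.exp x / φ x with hGdef
  have hF' : ∀ x, HasDerivAt F (G x) x := by
    intro x
    have h1 : HasDerivAt (fun x : ℝ => p * x) p x := by
      simpa using (hasDerivAt_id x).const_mul p
    have h2 : HasDerivAt (fun x : ℝ => x ^ 2 / 8) (x / 4) x := by
      have := (hasDerivAt_pow 2 x).div_const 8
      exact this.congr_deriv (by rw [show (2:ℕ) - 1 = 1 from rfl]; push_cast; ring)
    have h3 : HasDerivAt (fun x => Real.log (φ x)) (p * Real.exp x / φ x) x :=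
      (hφ' x).log (hφpos x).ne'
    exact (h1.add h2).sub h3
  have hG' : ∀ x, HasDerivAt G (1/4 - (p * Real.exp x * φ x - p * Real.exp x * (p * Real.exp x)) / (φ x) ^ 2) x := by
    intro x
    have h1 : HasDerivAt (fun x : ℝ => p + x / 4) (1/4) x := by
      simpa using ((hasDerivAt_id x).div_const 4).const_add p
    have h2 : HasDerivAt (fun x => p * Real.exp x / φ x)
        ((p * Real.exp x * φ x - p * Real.exp x * (p * Real.exp x)) / (φ x) ^ 2) x :=
      ((Real.hasDerivAt_exp x).const_mul p).div (hφ' x) (hφpos x).ne'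
    exact h1.sub h2
  have hG'nonneg : ∀ x, 0 ≤ 1/4 - (p * Real.exp x * φ x - p * Real.exp x * (p * Real.exp x)) / (φ x) ^ 2 := by
    intro x
    rw [sub_nonneg, div_le_iff₀ (pow_pos (hφpos x) 2)]
    have hφx : φ x = (1 - p) + p * Real.exp x := rfl
    nlinarith [sq_nonneg ((1 - p) - p * Real.exp x), Real.exp_pos x]
  have hGmono : Monotone G :=
    monotone_of_deriv_nonneg (fun x => (hG' x).differentiableAt) (fun x => by
      rw [(hG' x).deriv]; exact hG'nonneg x)
  have hG0 : G 0 = 0 := by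
    simp only [hGdef, hφdef, Real.exp_zero, mul_one]
    norm_num
  have hF0 : F 0 = 0 := by
    simp only [hFdef, hφdef, Real.exp_zero, mul_one, mul_zero]
    norm_num
  have key : ∀ x, 0 ≤ F x := by
    intro x
    rcases le_or_gt 0 x with hx | hx
    · have hmono : MonotoneOn F (Set.Ici 0) := by
        apply monotoneOn_of_deriv_nonneg (convex_Ici 0)
          (fun y _ => (hF' y).continuousAt.continuousWithinAt)
          (fun y _ => (hF' y).differentiableAt.differentiableWithinAt)
        intro y hy
        rw [(hF' y).deriv, ← hG0]
        exact hGmono (le_of_lt (by simpa using hy))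
      have := hmono (Set.self_mem_Ici) (Set.mem_Ici.2 hx) hx
      rwa [hF0] at this
    · have hanti : AntitoneOn F (Set.Iic 0) := by
        apply antitoneOn_of_deriv_nonpos (convex_Iic 0)
          (fun y _ => (hF' y).continuousAt.continuousWithinAt)
          (fun y _ => (hF' y).differentiableAt.differentiableWithinAt)
        intro y hy
        rw [(hF' y).deriv, ← hG0]
        exact hGmono (le_of_lt (by simpa using hy))
      have := hanti (Set.mem_Iic.2 hx.le) (Set.self_mem_Iic) hx.le
      rwa [hF0] at this
  have hFh := key h
  have : Real.log (φ h) ≤ p * h + h ^ 2 / 8 := by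
    simp only [hFdef] at hFh; linarith
  calc φ h = Real.exp (Real.log (φ h)) := (Real.exp_log (hφpos h)).symm
    _ ≤ Real.exp (p * h + h ^ 2 / 8) := Real.exp_le_exp.2 this

lemma integrable_exp_of_bounded {Ω : Type*} [MeasurableSpace Ω] {μ : Measure Ω}
    [IsProbabilityMeasure μ] {X : Ω → ℝ} (hX : Measurable X) {B : ℝ}
    (hB : ∀ ω, |X ω| ≤ B) (t : ℝ) :
    Integrable (fun ω => Real.exp (t * X ω)) μ := by
  refine Integrable.mono' (integrable_const (Real.exp (|t| * B)))
    ((hX.const_mul t).exp.aestronglyMeasurable) (ae_of_all _ fun ω => ?_)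
  rw [Real.norm_eq_abs, Real.abs_exp]
  refine Real.exp_le_exp.2 ?_
  calc t * X ω ≤ |t * X ω| := le_abs_self _
    _ = |t| * |X ω| := abs_mul _ _
    _ ≤ |t| * B := mul_le_mul_of_nonneg_left (hB ω) (abs_nonneg t)

lemma mgf_le_of_Icc {Ω : Type*} [MeasurableSpace Ω] {μ : Measure Ω}
    [IsProbabilityMeasure μ] {X : Ω → ℝ} (hX : Measurable X)
    (hr : ∀ ω, X ω ∈ Set.Icc (0:ℝ) 1) (t : ℝ) :
    mgf X μ t ≤ Real.exp (t * (∫ ω, X ω ∂μ) + t ^ 2 / 8) := by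
  set m := ∫ ω, X ω ∂μ with hm
  have hXint : Integrable X μ := by
    refine Integrable.mono' (integrable_const 1) hX.aestronglyMeasurable
      (ae_of_all _ fun ω => ?_)
    rw [Real.norm_eq_abs, abs_le]
    exact ⟨by linarith [(hr ω).1], (hr ω).2⟩
  have hm0 : 0 ≤ m := integral_nonneg fun ω => (hr ω).1
  have hm1 : m ≤ 1 := by
    calc m ≤ ∫ _, (1:ℝ) ∂μ := integral_mono hXint (integrable_const 1) fun ω => (hr ω).2
      _ = 1 := by simp
  have hpt : ∀ ω, Real.exp (t * X ω) ≤ (1 - X ω) + X ω * Real.exp t := by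
    intro ω
    have := convexOn_exp.2 (Set.mem_univ 0) (Set.mem_univ t)
      (by linarith [(hr ω).2] : (0:ℝ) ≤ 1 - X ω) ((hr ω).1) (by ring)
    simpa [smul_eq_mul, mul_comm] using this
  have hint1 : Integrable (fun ω => Real.exp (t * X ω)) μ :=
    integrable_exp_of_bounded hX (fun ω => by
      rw [abs_le]; exact ⟨by linarith [(hr ω).1], (hr ω).2⟩) t
  have hint2 : Integrable (fun ω => (1 - X ω) + X ω * Real.exp t) μ :=
    ((integrable_const 1).sub hXint).add (hXint.mul_const _)
  have : mgf X μ t ≤ (1 - m) + m * Real.exp t := by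
    calc mgf X μ t = ∫ ω, Real.exp (t * X ω) ∂μ := rfl
      _ ≤ ∫ ω, ((1 - X ω) + X ω * Real.exp t) ∂μ := integral_mono hint1 hint2 hpt
      _ = (1 - m) + m * Real.exp t := by
          have heq : (fun ω => (1 - X ω) + X ω * Real.exp t)
              = fun ω => 1 + (Real.exp t - 1) * X ω := by
            funext ω; ring
          rw [heq, integral_add (integrable_const 1) (hXint.const_mul _),
            MeasureTheory.integral_const_mul, integral_const]
          simp only [measure_univ, probReal_univ, ENNReal.toReal_one, smul_eq_mul, one_mul, ← hm]
          ring
  calc mgf X μ t ≤ (1 - m) + m * Real.exp t := this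
    _ ≤ Real.exp (m * t + t ^ 2 / 8) := hoeffding_core m hm0 hm1 t
    _ = Real.exp (t * m + t ^ 2 / 8) := by rw [mul_comm m t]

theorem confidence_interval_average_means
    {Ω : Type*} [MeasurableSpace Ω] (μ : Measure Ω) [IsProbabilityMeasure μ]
    (T : ℕ) (hT : 1 ≤ T) (δ C : ℝ) (hδ : δ ∈ Set.Ioo (0 : ℝ) 1) (hC : 0 ≤ C)
    (g : Fin T → Ω → ℝ) (hmeas : ∀ τ, Measurable (g τ))
    (hrange : ∀ τ ω, g τ ω ∈ Set.Icc (0 : ℝ) 1)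
    (hindep : iIndepFun g μ)
    (S : Finset (Fin T)) (N : ℕ) (hS : S.card = N) (hN : 1 ≤ N)
    (g0 : ℝ) (hg0 : g0 ∈ Set.Icc (0 : ℝ) 1)
    (hcorr : ∑ τ : Fin T, |(∫ ω, g τ ω ∂μ) - g0| ≤ C) :
    ENNReal.ofReal (1 - δ) ≤
      μ {ω | |(1 / (N : ℝ)) * ∑ τ ∈ S, g τ ω -
              (1 / (T : ℝ)) * ∑ τ : Fin T, ∫ ω', g τ ω' ∂μ| ≤
        Real.sqrt (Real.log (2 / δ) / (2 * N)) + C / N + C / T} := by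
  have hNpos : (0:ℝ) < N := by exact_mod_cast hN
  have hTpos : (0:ℝ) < T := by exact_mod_cast hT
  set m : Fin T → ℝ := fun τ => ∫ ω, g τ ω ∂μ with hm
  set M : ℝ := ∑ τ ∈ S, m τ with hM
  set X : Ω → ℝ := fun ω => ∑ τ ∈ S, g τ ω with hX
  have hXeq : X = ∑ τ ∈ S, g τ := by funext ω; simp [hX, Finset.sum_apply]
  have hXmeas : Measurable X := Finset.measurable_sum S (fun τ _ => hmeas τ)
  have hXbd : ∀ ω, |X ω| ≤ (N:ℝ) := by
    intro ω
    rw [abs_le]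
    constructor
    · have : (0:ℝ) ≤ X ω := Finset.sum_nonneg fun τ _ => (hrange τ ω).1
      linarith
    · calc X ω ≤ S.card • (1:ℝ) :=
            Finset.sum_le_card_nsmul S _ 1 (fun τ _ => (hrange τ ω).2)
        _ = (N:ℝ) := by rw [hS]; simp
  set L : ℝ := Real.log (2 / δ) with hLdef
  have hL : 0 ≤ L := Real.log_nonneg (by
    rw [le_div_iff₀ hδ.1]; linarith [hδ.2])
  set ε : ℝ := Real.sqrt (L / (2 * N)) with hε
  have hεnonneg : 0 ≤ ε := Real.sqrt_nonneg _
  have hεsq : ε ^ 2 = L / (2 * N) := Real.sq_sqrt (by positivity)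
  have h2N : 2 * (N:ℝ) * ε ^ 2 = L := by
    rw [hεsq]; field_simp
  have hexpL : Real.exp (-(2 * (N:ℝ) * ε ^ 2)) = δ / 2 := by
    rw [h2N, hLdef, Real.exp_neg, Real.exp_log (div_pos two_pos hδ.1), inv_div]
  -- mgf bound for the sum
  have hmgf : ∀ t : ℝ, mgf X μ t ≤ Real.exp (t * M + N * t ^ 2 / 8) := by
    intro t
    rw [hXeq, hindep.mgf_sum hmeas S]
    calc ∏ τ ∈ S, mgf (g τ) μ t
        ≤ ∏ τ ∈ S, Real.exp (t * m τ + t ^ 2 / 8) :=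
          Finset.prod_le_prod (fun _ _ => mgf_nonneg)
            (fun τ _ => mgf_le_of_Icc (hmeas τ) (fun ω => hrange τ ω) t)
      _ = Real.exp (∑ τ ∈ S, (t * m τ + t ^ 2 / 8)) := (Real.exp_sum S _).symm
      _ = Real.exp (t * M + N * t ^ 2 / 8) := by
          congr 1
          rw [Finset.sum_add_distrib, ← Finset.mul_sum, Finset.sum_const, hS,
            nsmul_eq_mul, hM]
          ring
  have hint : ∀ t : ℝ, Integrable (fun ω => Real.exp (t * X ω)) μ :=
    fun t => integrable_exp_of_bounded hXmeas hXbd t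
  -- upper tail
  have hup : (μ {ω | M + N * ε ≤ X ω}).toReal ≤ δ / 2 := by
    have h1 := measure_ge_le_exp_mul_mgf (μ := μ) (X := X) (M + N * ε)
      (t := 4 * ε) (by positivity) (hint _)
    refine h1.trans ?_
    calc Real.exp (-(4 * ε) * (M + N * ε)) * mgf X μ (4 * ε)
        ≤ Real.exp (-(4 * ε) * (M + N * ε)) *
            Real.exp ((4 * ε) * M + N * (4 * ε) ^ 2 / 8) :=
          mul_le_mul_of_nonneg_left (hmgf _) (Real.exp_pos _).le
      _ = Real.exp (-(2 * (N:ℝ) * ε ^ 2)) := by rw [← Real.exp_add]; congr 1; ring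
      _ = δ / 2 := hexpL
  -- lower tail
  have hlo : (μ {ω | X ω ≤ M - N * ε}).toReal ≤ δ / 2 := by
    have h1 := measure_le_le_exp_mul_mgf (μ := μ) (X := X) (M - N * ε)
      (t := -(4 * ε)) (by linarith) (hint _)
    refine h1.trans ?_
    calc Real.exp (-(-(4 * ε)) * (M - N * ε)) * mgf X μ (-(4 * ε))
        ≤ Real.exp (-(-(4 * ε)) * (M - N * ε)) *
            Real.exp ((-(4 * ε)) * M + N * (-(4 * ε)) ^ 2 / 8) :=
          mul_le_mul_of_nonneg_left (hmgf _) (Real.exp_pos _).le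
      _ = Real.exp (-(2 * (N:ℝ) * ε ^ 2)) := by rw [← Real.exp_add]; congr 1; ring
      _ = δ / 2 := hexpL
  -- to ENNReal
  have hupE : μ {ω | M + N * ε ≤ X ω} ≤ ENNReal.ofReal (δ / 2) := by
    rw [← ENNReal.ofReal_toReal (measure_ne_top μ _)]
    exact ENNReal.ofReal_le_ofReal hup
  have hloE : μ {ω | X ω ≤ M - N * ε} ≤ ENNReal.ofReal (δ / 2) := by
    rw [← ENNReal.ofReal_toReal (measure_ne_top μ _)]
    exact ENNReal.ofReal_le_ofReal hlo
  set A : Set Ω := {ω | |X ω - M| ≤ N * ε} with hA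
  have hAmeas : MeasurableSet A :=
    measurableSet_le ((hXmeas.sub_const M).abs) measurable_const
  have hAc : Aᶜ ⊆ {ω | M + N * ε ≤ X ω} ∪ {ω | X ω ≤ M - N * ε} := by
    intro ω hω
    simp only [hA, Set.mem_compl_iff, Set.mem_setOf_eq, not_le] at hω
    rcases lt_abs.mp hω with h' | h'
    · exact Or.inl (by simp only [Set.mem_setOf_eq]; linarith)
    · exact Or.inr (by simp only [Set.mem_setOf_eq]; linarith)
  have hAcle : μ Aᶜ ≤ ENNReal.ofReal δ := by
    calc μ Aᶜ ≤ μ ({ω | M + N * ε ≤ X ω} ∪ {ω | X ω ≤ M - N * ε}) :=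
          measure_mono hAc
      _ ≤ μ {ω | M + N * ε ≤ X ω} + μ {ω | X ω ≤ M - N * ε} := measure_union_le _ _
      _ ≤ ENNReal.ofReal (δ / 2) + ENNReal.ofReal (δ / 2) := add_le_add hupE hloE
      _ = ENNReal.ofReal δ := by
          rw [← ENNReal.ofReal_add (by linarith [hδ.1.le]) (by linarith [hδ.1.le])]
          norm_num
  have hAge : ENNReal.ofReal (1 - δ) ≤ μ A := by
    have h1 : μ A = 1 - μ Aᶜ := by
      simpa using prob_compl_eq_one_sub (μ := μ) hAmeas.compl
    rw [h1, show (ENNReal.ofReal (1 - δ)) = 1 - ENNReal.ofReal δ by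
      rw [ENNReal.ofReal_sub 1 hδ.1.le, ENNReal.ofReal_one]]
    exact tsub_le_tsub_left hAcle 1
  refine le_trans hAge (measure_mono ?_)
  -- deterministic part
  intro ω hω
  simp only [hA, Set.mem_setOf_eq] at hω ⊢
  have E1 : |∑ τ ∈ S, (m τ - g0)| ≤ C := by
    refine (Finset.abs_sum_le_sum_abs _ _).trans ?_
    refine le_trans (Finset.sum_le_sum_of_subset_of_nonneg (Finset.subset_univ S)
      (fun _ _ _ => abs_nonneg _)) ?_
    exact hcorr
  have E2 : |∑ τ : Fin T, (m τ - g0)| ≤ C := by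
    refine (Finset.abs_sum_le_sum_abs _ _).trans ?_
    exact hcorr
  have hid : (1 / (N:ℝ)) * X ω - (1 / (T:ℝ)) * ∑ τ : Fin T, m τ
      = (1 / (N:ℝ)) * (X ω - M) + (1 / (N:ℝ)) * (∑ τ ∈ S, (m τ - g0))
        - (1 / (T:ℝ)) * (∑ τ : Fin T, (m τ - g0)) := by
    rw [Finset.sum_sub_distrib, Finset.sum_sub_distrib, Finset.sum_const,
      Finset.sum_const, hS, Finset.card_univ, Fintype.card_fin]
    push_cast
    field_simp
    ring
  calc |(1 / (N:ℝ)) * ∑ τ ∈ S, g τ ω - (1 / (T:ℝ)) * ∑ τ : Fin T, m τ|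
      = |(1 / (N:ℝ)) * (X ω - M) + (1 / (N:ℝ)) * (∑ τ ∈ S, (m τ - g0))
          - (1 / (T:ℝ)) * (∑ τ : Fin T, (m τ - g0))| := by rw [← hid]
    _ ≤ |(1 / (N:ℝ)) * (X ω - M) + (1 / (N:ℝ)) * (∑ τ ∈ S, (m τ - g0))|
          + |(1 / (T:ℝ)) * (∑ τ : Fin T, (m τ - g0))| := abs_sub _ _
    _ ≤ |(1 / (N:ℝ)) * (X ω - M)| + |(1 / (N:ℝ)) * (∑ τ ∈ S, (m τ - g0))|
          + |(1 / (T:ℝ)) * (∑ τ : Fin T, (m τ - g0))| :=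
        add_le_add_left (abs_add_le _ _) _
    _ ≤ ε + C / N + C / T := by
        have h1 : |(1 / (N:ℝ)) * (X ω - M)| ≤ ε := by
          rw [abs_mul, abs_of_pos (by positivity : (0:ℝ) < 1 / N)]
          calc (1 / (N:ℝ)) * |X ω - M| ≤ (1 / (N:ℝ)) * (N * ε) := by
                exact mul_le_mul_of_nonneg_left hω (by positivity)
            _ = ε := by field_simp
        have h2 : |(1 / (N:ℝ)) * (∑ τ ∈ S, (m τ - g0))| ≤ C / N := by
          rw [abs_mul, abs_of_pos (by positivity : (0:ℝ) < 1 / N), one_div,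
            ← div_eq_inv_mul]
          gcongr
        have h3 : |(1 / (T:ℝ)) * (∑ τ : Fin T, (m τ - g0))| ≤ C / T := by
          rw [abs_mul, abs_of_pos (by positivity : (0:ℝ) < 1 / T), one_div,
            ← div_eq_inv_mul]
          gcongr
        linarith
end

section
/- (Deterministic violation decomposition.) Let n, m, T ≥ 1 be integers and α ∈ ℝ^m. For each t ∈ [T] and i ∈ [m], let μ_{t,i} ∈ [0,1]^n, ĝ_{t,i} ∈ [0,1]^n, ξ_t ∈ [0,1]^n, q_t ∈ [0,1]^n, q̂_t ∈ [0,1]^n, and g°_i ∈ [0,1]^n. Assume that for all t ∈ [T], i ∈ [m] and all coordinates j ∈ [n]: | ĝ_{t,i,j} − g°_{i,j} | ≤ ξ_{t,j}, and that (ĝ_{t,i} − ξ_t)·q̂_t ≤ α_i. Then max_{i∈[m]} Σ_{t=1}^T [ μ_{t,i}·q_t − α_i ]^+ ≤ Σ_{t=1}^T max_{i∈[m]} ‖μ_{t,i} − g°_i‖₁ + 2·Σ_{t=1}^T ξ_t·q_t + Σ_{t=1}^T ‖q_t − q̂_t‖₁, where [z]^+ = max{z, 0}. -/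
/-!
Fix a round `t` and a constraint `i`. Optimism of `q̂_t` gives `α_i ≥ (ĝ_{t,i} − ξ_t)·q̂_t`, so the
violation `μ_{t,i}·q_t − α_i` is at most `μ_{t,i}·q_t − (ĝ_{t,i} − ξ_t)·q̂_t`. Swapping `q̂_t` for
`q_t` costs at most `‖q_t − q̂_t‖₁` because `ĝ_{t,i} − ξ_t ∈ [−1, 1]`; the confidence bound gives
`ĝ_{t,i} − ξ_t ≥ g°_i − 2ξ_t`, and `(μ_{t,i} − g°_i)·q_t ≤ ‖μ_{t,i} − g°_i‖₁` as `q_t ∈ [0,1]^n`.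
The right-hand side is nonnegative, so the same bound holds for the positive part; summing over
`t` and bounding the corruption of `i` by the maximum over all constraints gives the claim.
-/

open Finset

theorem mul_sub_mul_le_of_abs_sub_le {a g b ξ x y : ℝ} (hconf : |b - g| ≤ ξ)
    (hb : |b - ξ| ≤ 1) (hx₀ : 0 ≤ x) (hx₁ : x ≤ 1) :
    a * x - (b - ξ) * y ≤ |a - g| + 2 * (ξ * x) + |x - y| := by
  have hcorr : (a - g) * x ≤ |a - g| :=
    calc (a - g) * x ≤ |a - g| * x := by gcongr; exact le_abs_self _
      _ ≤ |a - g| := mul_le_of_le_one_right (abs_nonneg _) hx₁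
  have hconf' : (g - b + ξ) * x ≤ 2 * ξ * x := by
    gcongr
    linarith [(abs_le.mp hconf).1]
  have hswap : (b - ξ) * (x - y) ≤ |x - y| :=
    calc (b - ξ) * (x - y) ≤ |b - ξ| * |x - y| := by rw [← abs_mul]; exact le_abs_self _
      _ ≤ |x - y| := mul_le_of_le_one_left (abs_nonneg _) hb
  calc a * x - (b - ξ) * y = (a - g) * x + (g - b + ξ) * x + (b - ξ) * (x - y) := by ring
    _ ≤ |a - g| + 2 * (ξ * x) + |x - y| := by linarith

theorem max_sum_mul_sub_le_of_optimistic {ι : Type*} [Fintype ι] {a g b ξ x y : ι → ℝ} {c : ℝ}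
    (hconf : ∀ j, |b j - g j| ≤ ξ j) (hb : ∀ j, |b j - ξ j| ≤ 1)
    (hx : ∀ j, x j ∈ Set.Icc (0 : ℝ) 1) (hfeas : ∑ j, (b j - ξ j) * y j ≤ c) :
    max ((∑ j, a j * x j) - c) 0
      ≤ (∑ j, |a j - g j|) + 2 * ∑ j, ξ j * x j + ∑ j, |x j - y j| := by
  have hξ : ∀ j, 0 ≤ ξ j := fun j => (abs_nonneg _).trans (hconf j)
  have hviol : (∑ j, a j * x j) - ∑ j, (b j - ξ j) * y j
      ≤ (∑ j, |a j - g j|) + 2 * ∑ j, ξ j * x j + ∑ j, |x j - y j| := by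
    rw [← sum_sub_distrib, mul_sum, ← sum_add_distrib, ← sum_add_distrib]
    exact sum_le_sum fun j _ =>
      mul_sub_mul_le_of_abs_sub_le (hconf j) (hb j) (hx j).1 (hx j).2
  refine max_le (by linarith) ?_
  have hξx : 0 ≤ ∑ j, ξ j * x j := sum_nonneg fun j _ => mul_nonneg (hξ j) (hx j).1
  have hswap : 0 ≤ ∑ j, |x j - y j| := sum_nonneg fun j _ => abs_nonneg _
  have hcorr : 0 ≤ ∑ j, |a j - g j| := sum_nonneg fun j _ => abs_nonneg _
  linarith

theorem violation_decomposition_general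
    (n m T : ℕ)
    (α : Fin m → ℝ)
    (μ : Fin T → Fin m → Fin n → ℝ)
    (ghat : Fin T → Fin m → Fin n → ℝ) (hghat : ∀ t i j, ghat t i j ∈ Set.Icc (0 : ℝ) 1)
    (ξ : Fin T → Fin n → ℝ) (hξ : ∀ t j, ξ t j ∈ Set.Icc (0 : ℝ) 1)
    (q : Fin T → Fin n → ℝ) (hq : ∀ t j, q t j ∈ Set.Icc (0 : ℝ) 1)
    (qhat : Fin T → Fin n → ℝ)
    (g0 : Fin m → Fin n → ℝ)
    (hconf : ∀ t i j, |ghat t i j - g0 i j| ≤ ξ t j)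
    (hfeas : ∀ t i, ∑ j, (ghat t i j - ξ t j) * qhat t j ≤ α i) :
    (⨆ i : Fin m, ∑ t, max ((∑ j, μ t i j * q t j) - α i) 0)
      ≤ (∑ t, ⨆ i : Fin m, ∑ j, |μ t i j - g0 i j|)
        + 2 * ∑ t, ∑ j, ξ t j * q t j
        + ∑ t, ∑ j, |q t j - qhat t j| := by
  have hb : ∀ t i j, |ghat t i j - ξ t j| ≤ 1 := fun t i j =>
    abs_sub_le_of_nonneg_of_le (hghat t i j).1 (hghat t i j).2 (hξ t j).1 (hξ t j).2
  have hcorr : ∀ t i, ∑ j, |μ t i j - g0 i j| ≤ ⨆ i, ∑ j, |μ t i j - g0 i j| := fun t =>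
    le_ciSup (Finite.bddAbove_range _)
  rw [mul_sum, ← sum_add_distrib, ← sum_add_distrib]
  refine Real.iSup_le (fun i => sum_le_sum fun t _ => ?_) ?_
  · linarith [max_sum_mul_sub_le_of_optimistic (a := μ t i) (hconf t i) (hb t i) (hq t) (hfeas t i),
      hcorr t i]
  · refine sum_nonneg fun t _ => add_nonneg (add_nonneg ?_ ?_) ?_
    · exact Real.iSup_nonneg fun i => sum_nonneg fun j _ => abs_nonneg _
    · exact mul_nonneg zero_le_two (sum_nonneg fun j _ => mul_nonneg (hξ t j).1 (hq t j).1)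
    · exact sum_nonneg fun j _ => abs_nonneg _

theorem violation_decomposition
    (n m T : ℕ) (hn : 1 ≤ n) (hm : 1 ≤ m) (hT : 1 ≤ T)
    (α : Fin m → ℝ)
    (μ : Fin T → Fin m → Fin n → ℝ) (hμ : ∀ t i j, μ t i j ∈ Set.Icc (0 : ℝ) 1)
    (ghat : Fin T → Fin m → Fin n → ℝ) (hghat : ∀ t i j, ghat t i j ∈ Set.Icc (0 : ℝ) 1)
    (ξ : Fin T → Fin n → ℝ) (hξ : ∀ t j, ξ t j ∈ Set.Icc (0 : ℝ) 1)
    (q : Fin T → Fin n → ℝ) (hq : ∀ t j, q t j ∈ Set.Icc (0 : ℝ) 1)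
    (qhat : Fin T → Fin n → ℝ) (hqhat : ∀ t j, qhat t j ∈ Set.Icc (0 : ℝ) 1)
    (g0 : Fin m → Fin n → ℝ) (hg0 : ∀ i j, g0 i j ∈ Set.Icc (0 : ℝ) 1)
    (hconf : ∀ t i j, |ghat t i j - g0 i j| ≤ ξ t j)
    (hfeas : ∀ t i, ∑ j, (ghat t i j - ξ t j) * qhat t j ≤ α i) :
    (⨆ i : Fin m, ∑ t, max ((∑ j, μ t i j * q t j) - α i) 0)
      ≤ (∑ t, ⨆ i : Fin m, ∑ j, |μ t i j - g0 i j|)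
        + 2 * ∑ t, ∑ j, ξ t j * q t j
        + ∑ t, ∑ j, |q t j - qhat t j| :=
  violation_decomposition_general n m T α μ ghat hghat ξ hξ q hq qhat g0 hconf hfeas
end

section
/- (Deterministic regret decomposition.) Let n, T ≥ 1 be integers and C_r ≥ 0. Let μ_1,...,μ_T ∈ [0,1]^n and r° ∈ [0,1]^n with Σ_{t=1}^T ‖μ_t − r°‖₁ ≤ C_r, and set r̄ := (1/T)·Σ_{t=1}^T μ_t. Let q* ∈ [0,1]^n and, for each t ∈ [T], let q_t, q̂_t ∈ [0,1]^n, φ_t ∈ [0,1]^n, and u_t ∈ ℝ^n. Assume for every t ∈ [T]: (a) r̄_j ≤ u_{t,j} ≤ r̄_j + 2·φ_{t,j} for every coordinate j ∈ [n], and (b) u_t·q̂_t ≥ u_t·q*. Then Σ_{t=1}^T μ_t·(q* − q_t) ≤ 2·Σ_{t=1}^T φ_t·q̂_t + Σ_{t=1}^T ‖q̂_t − q_t‖₁ + 2·C_r. -/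
/-!
Statement 12 (Deterministic regret decomposition).
If `u_t` is sandwiched between `r̄` and `r̄ + 2φ_t` componentwise and
`u_t·q̂_t ≥ u_t·q*` for every episode, then
`Σ_t μ_t·(q* − q_t) ≤ 2 Σ_t φ_t·q̂_t + Σ_t ‖q̂_t − q_t‖₁ + 2 C_r`.
-/

open Finset

theorem regret_decomposition
    (n T : ℕ) (hn : 1 ≤ n) (hT : 1 ≤ T) (Cr : ℝ) (hCr : 0 ≤ Cr)
    (μ : Fin T → Fin n → ℝ) (hμ : ∀ t j, μ t j ∈ Set.Icc (0 : ℝ) 1)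
    (r0 : Fin n → ℝ) (hr0 : ∀ j, r0 j ∈ Set.Icc (0 : ℝ) 1)
    (hcorr : ∑ t, ∑ j, |μ t j - r0 j| ≤ Cr)
    (rbar : Fin n → ℝ) (hrbar : rbar = fun j => (1 / (T : ℝ)) * ∑ t, μ t j)
    (qstar : Fin n → ℝ) (hqstar : ∀ j, qstar j ∈ Set.Icc (0 : ℝ) 1)
    (q : Fin T → Fin n → ℝ) (hq : ∀ t j, q t j ∈ Set.Icc (0 : ℝ) 1)
    (qhat : Fin T → Fin n → ℝ) (hqhat : ∀ t j, qhat t j ∈ Set.Icc (0 : ℝ) 1)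
    (φ : Fin T → Fin n → ℝ) (hφ : ∀ t j, φ t j ∈ Set.Icc (0 : ℝ) 1)
    (u : Fin T → Fin n → ℝ)
    (hsandwich : ∀ t j, rbar j ≤ u t j ∧ u t j ≤ rbar j + 2 * φ t j)
    (hopt : ∀ t, (∑ j, u t j * qstar j) ≤ ∑ j, u t j * qhat t j) :
    ∑ t, ∑ j, μ t j * (qstar j - q t j)
      ≤ 2 * (∑ t, ∑ j, φ t j * qhat t j)
        + (∑ t, ∑ j, |qhat t j - q t j|) + 2 * Cr := by
  have hT0 : (0:ℝ) < T := by exact_mod_cast hT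
  -- basic facts about rbar
  have hsumμ : ∀ j, ∑ t, μ t j = (T:ℝ) * rbar j := by
    intro j; rw [hrbar]; field_simp
  have hrb0 : ∀ j, 0 ≤ rbar j := by
    intro j; rw [hrbar]
    exact mul_nonneg (by positivity)
      (Finset.sum_nonneg fun t _ => (hμ t j).1)
  have hrb1 : ∀ j, rbar j ≤ 1 := by
    intro j; rw [hrbar]
    rw [one_div, inv_mul_le_iff₀ hT0, mul_one]
    calc ∑ t, μ t j ≤ ∑ _t : Fin T, (1:ℝ) :=
          Finset.sum_le_sum fun t _ => (hμ t j).2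
      _ = T := by simp
  -- bound on total deviation of μ from rbar
  have hrbar_r0 : ∀ j, |rbar j - r0 j| ≤ (1/(T:ℝ)) * ∑ t, |μ t j - r0 j| := by
    intro j
    have : rbar j - r0 j = (1/(T:ℝ)) * ∑ t, (μ t j - r0 j) := by
      rw [Finset.sum_sub_distrib, hsumμ j]
      simp only [Finset.sum_const, Finset.card_univ, Fintype.card_fin, nsmul_eq_mul]
      field_simp
    rw [this, abs_mul, abs_of_pos (by positivity : (0:ℝ) < 1/(T:ℝ))]
    exact mul_le_mul_of_nonneg_left (Finset.abs_sum_le_sum_abs _ _) (by positivity)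
  have hdev : ∑ t, ∑ j, |μ t j - rbar j| ≤ 2 * Cr := by
    have h1 : ∀ t j, |μ t j - rbar j| ≤ |μ t j - r0 j| + |rbar j - r0 j| := by
      intro t j
      calc |μ t j - rbar j| = |(μ t j - r0 j) - (rbar j - r0 j)| := by ring_nf
        _ ≤ |μ t j - r0 j| + |rbar j - r0 j| := abs_sub _ _
    calc ∑ t, ∑ j, |μ t j - rbar j|
        ≤ ∑ t, ∑ j, (|μ t j - r0 j| + |rbar j - r0 j|) :=
          Finset.sum_le_sum fun t _ => Finset.sum_le_sum fun j _ => h1 t j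
      _ = (∑ t, ∑ j, |μ t j - r0 j|) + (T:ℝ) * ∑ j, |rbar j - r0 j| := by
          simp only [Finset.sum_add_distrib, Finset.sum_const, Finset.card_univ,
            Fintype.card_fin, nsmul_eq_mul]
      _ ≤ Cr + (T:ℝ) * ∑ j, (1/(T:ℝ)) * ∑ t, |μ t j - r0 j| := by
          have h2 : ∑ j, |rbar j - r0 j| ≤ ∑ j, (1/(T:ℝ)) * ∑ t, |μ t j - r0 j| :=
            Finset.sum_le_sum fun j _ => hrbar_r0 j
          have h3 := mul_le_mul_of_nonneg_left h2 hT0.le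
          linarith
      _ = Cr + ∑ j, ∑ t, |μ t j - r0 j| := by
          rw [Finset.mul_sum]
          congr 1
          refine Finset.sum_congr rfl fun j _ => ?_
          field_simp
      _ = Cr + ∑ t, ∑ j, |μ t j - r0 j| := by rw [Finset.sum_comm]
      _ ≤ Cr + Cr := by linarith
      _ = 2 * Cr := by ring
  -- per-episode optimism bound
  have hkey : ∀ t, ∑ j, rbar j * qstar j ≤
      2 * (∑ j, φ t j * qhat t j) + ∑ j, rbar j * qhat t j := by
    intro t
    calc ∑ j, rbar j * qstar j ≤ ∑ j, u t j * qstar j :=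
          Finset.sum_le_sum fun j _ =>
            mul_le_mul_of_nonneg_right (hsandwich t j).1 (hqstar j).1
      _ ≤ ∑ j, u t j * qhat t j := hopt t
      _ ≤ ∑ j, (rbar j + 2 * φ t j) * qhat t j :=
          Finset.sum_le_sum fun j _ =>
            mul_le_mul_of_nonneg_right (hsandwich t j).2 (hqhat t j).1
      _ = 2 * (∑ j, φ t j * qhat t j) + ∑ j, rbar j * qhat t j := by
          rw [Finset.mul_sum, ← Finset.sum_add_distrib]
          refine Finset.sum_congr rfl fun j _ => ?_
          ring
  -- rbar difference bound
  have hdiff : ∀ t, ∑ j, rbar j * (qhat t j - q t j) ≤ ∑ j, |qhat t j - q t j| := by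
    intro t
    refine Finset.sum_le_sum fun j _ => ?_
    calc rbar j * (qhat t j - q t j) ≤ |rbar j * (qhat t j - q t j)| := le_abs_self _
      _ = |rbar j| * |qhat t j - q t j| := abs_mul _ _
      _ ≤ 1 * |qhat t j - q t j| := by
          apply mul_le_mul_of_nonneg_right _ (abs_nonneg _)
          rw [abs_of_nonneg (hrb0 j)]; exact hrb1 j
      _ = |qhat t j - q t j| := one_mul _
  -- deviation term bound
  have hdevterm : ∑ t, ∑ j, (μ t j - rbar j) * (qstar j - q t j) ≤ 2 * Cr := by
    have hzero : ∑ t, ∑ j, (μ t j - rbar j) * qstar j = 0 := by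
      rw [Finset.sum_comm]
      refine Finset.sum_eq_zero fun j _ => ?_
      rw [← Finset.sum_mul, Finset.sum_sub_distrib, hsumμ j]
      simp only [Finset.sum_const, Finset.card_univ, Fintype.card_fin, nsmul_eq_mul]
      ring
    have hsplit : ∑ t, ∑ j, (μ t j - rbar j) * (qstar j - q t j)
        = (∑ t, ∑ j, (μ t j - rbar j) * qstar j)
          - ∑ t, ∑ j, (μ t j - rbar j) * q t j := by
      rw [← Finset.sum_sub_distrib]
      refine Finset.sum_congr rfl fun t _ => ?_
      rw [← Finset.sum_sub_distrib]
      refine Finset.sum_congr rfl fun j _ => ?_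
      ring
    rw [hsplit, hzero, zero_sub]
    calc -∑ t, ∑ j, (μ t j - rbar j) * q t j
        = ∑ t, ∑ j, (rbar j - μ t j) * q t j := by
          rw [← Finset.sum_neg_distrib]
          refine Finset.sum_congr rfl fun t _ => ?_
          rw [← Finset.sum_neg_distrib]
          refine Finset.sum_congr rfl fun j _ => ?_
          ring
      _ ≤ ∑ t, ∑ j, |μ t j - rbar j| := by
          refine Finset.sum_le_sum fun t _ => Finset.sum_le_sum fun j _ => ?_
          calc (rbar j - μ t j) * q t j ≤ |(rbar j - μ t j) * q t j| := le_abs_self _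
            _ = |μ t j - rbar j| * |q t j| := by rw [abs_mul, abs_sub_comm]
            _ ≤ |μ t j - rbar j| * 1 := by
                apply mul_le_mul_of_nonneg_left _ (abs_nonneg _)
                rw [abs_of_nonneg (hq t j).1]; exact (hq t j).2
            _ = |μ t j - rbar j| := mul_one _
      _ ≤ 2 * Cr := hdev
  -- put everything together
  have hmain : ∑ t, ∑ j, μ t j * (qstar j - q t j)
      = (∑ t, ∑ j, (μ t j - rbar j) * (qstar j - q t j))
        + ∑ t, ((∑ j, rbar j * qstar j) - ∑ j, rbar j * q t j) := by
    rw [← Finset.sum_add_distrib]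
    refine Finset.sum_congr rfl fun t _ => ?_
    rw [← Finset.sum_sub_distrib, ← Finset.sum_add_distrib]
    refine Finset.sum_congr rfl fun j _ => ?_
    ring
  rw [hmain]
  have hfinal : ∑ t, ((∑ j, rbar j * qstar j) - ∑ j, rbar j * q t j)
      ≤ 2 * (∑ t, ∑ j, φ t j * qhat t j) + ∑ t, ∑ j, |qhat t j - q t j| := by
    calc ∑ t, ((∑ j, rbar j * qstar j) - ∑ j, rbar j * q t j)
        ≤ ∑ t, (2 * (∑ j, φ t j * qhat t j)
            + ((∑ j, rbar j * qhat t j) - ∑ j, rbar j * q t j)) := by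
          refine Finset.sum_le_sum fun t _ => ?_
          have := hkey t; linarith
      _ = ∑ t, (2 * (∑ j, φ t j * qhat t j) + ∑ j, rbar j * (qhat t j - q t j)) := by
          refine Finset.sum_congr rfl fun t _ => ?_
          rw [← Finset.sum_sub_distrib]
          congr 1
          refine Finset.sum_congr rfl fun j _ => ?_
          ring
      _ ≤ ∑ t, (2 * (∑ j, φ t j * qhat t j) + ∑ j, |qhat t j - q t j|) := by
          refine Finset.sum_le_sum fun t _ => ?_
          have := hdiff t; linarith
      _ = 2 * (∑ t, ∑ j, φ t j * qhat t j) + ∑ t, ∑ j, |qhat t j - q t j| := by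
          rw [Finset.sum_add_distrib, Finset.mul_sum]
  linarith
end

section
/- (Positive violation of the averaged constraints.) Let n, m, T ≥ 1 be integers, α ∈ ℝ^m, and C ≥ 0. Let μ_{t,i} ∈ [0,1]^n for t ∈ [T], i ∈ [m], and let g° ∈ [0,1]^n with Σ_{t=1}^T max_{i∈[m]} ‖μ_{t,i} − g°‖₁ ≤ C. Set Ḡ_i := (1/T)·Σ_{t=1}^T μ_{t,i}. Then for every q_1,...,q_T ∈ [0,1]^n: Σ_{t=1}^T Σ_{i=1}^m [ Ḡ_i·q_t − α_i ]^+ ≤ m · max_{i∈[m]} Σ_{t=1}^T [ μ_{t,i}·q_t − α_i ]^+ + 2·m·C, where [z]^+ = max{z, 0}. -/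
/-!
Statement 13 (Positive violation of the averaged constraints).
With `Ḡ_i = (1/T) Σ_t μ_{t,i}` and corruption
`Σ_t max_i ‖μ_{t,i} − g°‖₁ ≤ C`, for any `q_1, …, q_T ∈ [0,1]^n`:
`Σ_t Σ_i [Ḡ_i·q_t − α_i]^+ ≤ m · max_i Σ_t [μ_{t,i}·q_t − α_i]^+ + 2 m C`.
-/

open Finset

theorem averaged_constraints_positive_violation
    (n m T : ℕ) (hn : 1 ≤ n) (hm : 1 ≤ m) (hT : 1 ≤ T)
    (α : Fin m → ℝ) (C : ℝ) (hC : 0 ≤ C)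
    (μ : Fin T → Fin m → Fin n → ℝ) (hμ : ∀ t i j, μ t i j ∈ Set.Icc (0 : ℝ) 1)
    (g0 : Fin n → ℝ) (hg0 : ∀ j, g0 j ∈ Set.Icc (0 : ℝ) 1)
    (hcorr : ∑ t, ⨆ i : Fin m, ∑ j, |μ t i j - g0 j| ≤ C)
    (Gbar : Fin m → Fin n → ℝ)
    (hGbar : Gbar = fun i j => (1 / (T : ℝ)) * ∑ t, μ t i j)
    (q : Fin T → Fin n → ℝ) (hq : ∀ t j, q t j ∈ Set.Icc (0 : ℝ) 1) :
    ∑ t, ∑ i, max ((∑ j, Gbar i j * q t j) - α i) 0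
      ≤ (m : ℝ) * (⨆ i : Fin m, ∑ t, max ((∑ j, μ t i j * q t j) - α i) 0)
        + 2 * (m : ℝ) * C := by
  haveI : Nonempty (Fin m) := Fin.pos_iff_nonempty.mp hm
  have hT0 : (0 : ℝ) < T := by exact_mod_cast hT
  set E : Fin T → Fin m → ℝ := fun t i => ∑ j, |μ t i j - g0 j| with hE
  have hEsup : ∀ t i, E t i ≤ ⨆ i, E t i := fun t i =>
    le_ciSup (Set.Finite.bddAbove (Set.finite_range _)) i
  have hEnonneg : ∀ t i, 0 ≤ E t i := fun t i =>
    Finset.sum_nonneg fun j _ => abs_nonneg _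
  have hsum_nonneg : ∀ i, (0:ℝ) ≤ ∑ t, E t i := fun i =>
    Finset.sum_nonneg fun t _ => hEnonneg t i
  -- Gbar deviation from g0
  have hGg : ∀ i, ∑ j, |Gbar i j - g0 j| ≤ (1 / (T:ℝ)) * ∑ s, E s i := by
    intro i
    have h1 : ∀ j, Gbar i j - g0 j = (1 / (T:ℝ)) * ∑ s, (μ s i j - g0 j) := by
      intro j
      rw [hGbar]
      rw [Finset.sum_sub_distrib, Finset.sum_const, Finset.card_univ,
        Fintype.card_fin]
      field_simp
      rw [nsmul_eq_mul]
    calc ∑ j, |Gbar i j - g0 j|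
        ≤ ∑ j, (1 / (T:ℝ)) * ∑ s, |μ s i j - g0 j| := by
          apply Finset.sum_le_sum
          intro j _
          rw [h1 j, abs_mul, abs_of_pos (by positivity : (0:ℝ) < 1 / (T:ℝ))]
          exact mul_le_mul_of_nonneg_left (Finset.abs_sum_le_sum_abs _ _)
            (by positivity)
      _ = (1 / (T:ℝ)) * ∑ s, E s i := by
          rw [← Finset.mul_sum, Finset.sum_comm]
  -- pointwise bound
  have hpt : ∀ t i, max ((∑ j, Gbar i j * q t j) - α i) 0
      ≤ max ((∑ j, μ t i j * q t j) - α i) 0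
        + ((∑ j, |Gbar i j - g0 j|) + E t i) := by
    intro t i
    have hdiff : |(∑ j, Gbar i j * q t j) - (∑ j, μ t i j * q t j)|
        ≤ (∑ j, |Gbar i j - g0 j|) + E t i := by
      rw [← Finset.sum_sub_distrib]
      calc |∑ j, (Gbar i j * q t j - μ t i j * q t j)|
          ≤ ∑ j, |Gbar i j * q t j - μ t i j * q t j| :=
            Finset.abs_sum_le_sum_abs _ _
        _ ≤ ∑ j, (|Gbar i j - g0 j| + |μ t i j - g0 j|) := by
            apply Finset.sum_le_sum
            intro j _
            have : Gbar i j * q t j - μ t i j * q t j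
                = (Gbar i j - μ t i j) * q t j := by ring
            rw [this, abs_mul]
            calc |Gbar i j - μ t i j| * |q t j|
                ≤ |Gbar i j - μ t i j| * 1 := by
                  apply mul_le_mul_of_nonneg_left _ (abs_nonneg _)
                  rw [abs_le]
                  constructor
                  · linarith [(hq t j).1]
                  · exact (hq t j).2
              _ = |Gbar i j - μ t i j| := mul_one _
              _ = |(Gbar i j - g0 j) - (μ t i j - g0 j)| := by ring_nf
              _ ≤ |Gbar i j - g0 j| + |μ t i j - g0 j| := abs_sub _ _
        _ = (∑ j, |Gbar i j - g0 j|) + E t i := by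
            rw [Finset.sum_add_distrib]
    have h0 : (0:ℝ) ≤ max ((∑ j, μ t i j * q t j) - α i) 0
        + ((∑ j, |Gbar i j - g0 j|) + E t i) := by
      have := Finset.sum_nonneg (fun j (_ : j ∈ univ) => abs_nonneg (Gbar i j - g0 j))
      have := hEnonneg t i
      have := le_max_right ((∑ j, μ t i j * q t j) - α i) 0
      linarith
    apply max_le _ h0
    have h2 : (∑ j, Gbar i j * q t j) - α i
        ≤ ((∑ j, μ t i j * q t j) - α i)
          + ((∑ j, |Gbar i j - g0 j|) + E t i) := by
      have := abs_le.mp hdiff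
      linarith [this.2]
    calc (∑ j, Gbar i j * q t j) - α i
        ≤ ((∑ j, μ t i j * q t j) - α i)
          + ((∑ j, |Gbar i j - g0 j|) + E t i) := h2
      _ ≤ max ((∑ j, μ t i j * q t j) - α i) 0
          + ((∑ j, |Gbar i j - g0 j|) + E t i) := by
          have := le_max_left ((∑ j, μ t i j * q t j) - α i) 0
          linarith
  -- per-i bound
  set S : Fin m → ℝ := fun i => ∑ t, max ((∑ j, μ t i j * q t j) - α i) 0 with hS
  have hEsumC : ∀ i, ∑ t, E t i ≤ C := by
    intro i
    calc ∑ t, E t i ≤ ∑ t, ⨆ i, E t i :=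
          Finset.sum_le_sum fun t _ => hEsup t i
      _ ≤ C := hcorr
  have hperi : ∀ i, ∑ t, max ((∑ j, Gbar i j * q t j) - α i) 0 ≤ S i + 2 * C := by
    intro i
    calc ∑ t, max ((∑ j, Gbar i j * q t j) - α i) 0
        ≤ ∑ t, (max ((∑ j, μ t i j * q t j) - α i) 0
            + ((∑ j, |Gbar i j - g0 j|) + E t i)) :=
          Finset.sum_le_sum fun t _ => hpt t i
      _ = S i + ((T:ℝ) * (∑ j, |Gbar i j - g0 j|) + ∑ t, E t i) := by
          rw [Finset.sum_add_distrib, Finset.sum_add_distrib, Finset.sum_const,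
            Finset.card_univ, Fintype.card_fin]
          push_cast
          ring
      _ ≤ S i + ((T:ℝ) * ((1 / (T:ℝ)) * ∑ s, E s i) + ∑ t, E t i) := by
          have := hGg i
          have h3 := mul_le_mul_of_nonneg_left this (le_of_lt hT0)
          linarith
      _ = S i + 2 * (∑ t, E t i) := by
          field_simp
          ring
      _ ≤ S i + 2 * C := by
          have := hEsumC i
          linarith
  have hSsup : ∀ i, S i ≤ ⨆ i, S i := fun i =>
    le_ciSup (Set.Finite.bddAbove (Set.finite_range _)) i
  calc ∑ t, ∑ i, max ((∑ j, Gbar i j * q t j) - α i) 0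
      = ∑ i, ∑ t, max ((∑ j, Gbar i j * q t j) - α i) 0 := Finset.sum_comm
    _ ≤ ∑ i : Fin m, ((⨆ i, S i) + 2 * C) :=
        Finset.sum_le_sum fun i _ => le_trans (hperi i)
          (by have := hSsup i; linarith)
    _ = (m : ℝ) * (⨆ i : Fin m, ∑ t, max ((∑ j, μ t i j * q t j) - α i) 0)
        + 2 * (m : ℝ) * C := by
        rw [Finset.sum_const, Finset.card_univ, Fintype.card_fin]
        push_cast
        ring
end

section
/- (Negative-regret bound via the positive Lagrangian.) In addition to the setting below, let μ^r_t ∈ [0,1]^n (t ∈ [T]) with r̄ := (1/T)·Σ_t μ^r_t, and suppose there exists r° ∈ [0,1]^n with Σ_{t=1}^T ‖μ^r_t − r°‖₁ ≤ C_r. Let μ_{t,i} ∈ [0,1]^n (t ∈ [T], i ∈ [m]) with Ḡ_i := (1/T)·Σ_t μ_{t,i}, and suppose there exists g° ∈ [0,1]^n with Σ_{t=1}^T max_{i∈[m]} ‖μ_{t,i} − g°‖₁ ≤ C_G. Assume Slater's condition holds for (Q, (Ḡ_i)_i, α) with feasibility parameter ρ > 0, and let q* attain OPT := max{ r̄·q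 : q ∈ Q, Ḡ_i·q ≤ α_i for all i }. Then for every q_1,...,q_T ∈ Q: Σ_{t=1}^T μ^r_t·(q_t − q*) ≤ 2·C_r + (L·m/ρ)·V_T + (2·L·m/ρ)·C_G, where V_T := max_{i∈[m]} Σ_{t=1}^T [ μ_{t,i}·q_t − α_i ]^+ and [z]^+ = max{z,0}. -/
/-!
Statement 14 (Negative-regret bound via the positive Lagrangian).
Under Slater's condition for `(Q, (Ḡ_i)_i, α)` with feasibility parameter `ρ > 0`,
for any occupancies `q_1, …, q_T ∈ Q`:
`Σ_t μ^r_t·(q_t − q*) ≤ 2 C_r + (L m / ρ) V_T + (2 L m / ρ) C_G`,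
where `V_T = max_i Σ_t [μ_{t,i}·q_t − α_i]^+`.
-/

open Finset


private lemma dot_le_l1 {n : ℕ} (a b : Fin n → ℝ) (hb : ∀ j, |b j| ≤ 1) :
    ∑ j, a j * b j ≤ ∑ j, |a j| := by
  refine Finset.sum_le_sum fun j _ => ?_
  calc a j * b j ≤ |a j * b j| := le_abs_self _
    _ = |a j| * |b j| := abs_mul _ _
    _ ≤ |a j| * 1 := mul_le_mul_of_nonneg_left (hb j) (abs_nonneg _)
    _ = |a j| := mul_one _

set_option maxHeartbeats 1000000 in
theorem negative_regret_bound
    (n m T : ℕ) (hn : 1 ≤ n) (hm : 1 ≤ m) (hT : 1 ≤ T) (L : ℝ) (hL : 0 < L)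
    (Q : Set (Fin n → ℝ)) (hQne : Q.Nonempty) (hQcpt : IsCompact Q)
    (hQcvx : Convex ℝ Q) (hQbox : ∀ q ∈ Q, ∀ j, q j ∈ Set.Icc (0 : ℝ) 1)
    (hQsum : ∀ q ∈ Q, ∑ j, q j = L)
    (α : Fin m → ℝ) (hα : ∀ i, α i ∈ Set.Icc (0 : ℝ) L)
    (Cr CG : ℝ) (hCr : 0 ≤ Cr) (hCG : 0 ≤ CG)
    (μr : Fin T → Fin n → ℝ) (hμr : ∀ t j, μr t j ∈ Set.Icc (0 : ℝ) 1)
    (rbar : Fin n → ℝ) (hrbar : rbar = fun j => (1 / (T : ℝ)) * ∑ t, μr t j)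
    (r0 : Fin n → ℝ) (hr0 : ∀ j, r0 j ∈ Set.Icc (0 : ℝ) 1)
    (hcorrR : ∑ t, ∑ j, |μr t j - r0 j| ≤ Cr)
    (μ : Fin T → Fin m → Fin n → ℝ) (hμ : ∀ t i j, μ t i j ∈ Set.Icc (0 : ℝ) 1)
    (Gbar : Fin m → Fin n → ℝ)
    (hGbar : Gbar = fun i j => (1 / (T : ℝ)) * ∑ t, μ t i j)
    (g0 : Fin n → ℝ) (hg0 : ∀ j, g0 j ∈ Set.Icc (0 : ℝ) 1)
    (hcorrG : ∑ t, ⨆ i : Fin m, ∑ j, |μ t i j - g0 j| ≤ CG)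
    (ρ : ℝ) (hρ : ρ = sSup ((fun q => ⨅ i : Fin m, (α i - ∑ j, Gbar i j * q j)) '' Q))
    (hSlater : 0 < ρ)
    (qstar : Fin n → ℝ) (hqstarQ : qstar ∈ Q)
    (hqstarFeas : ∀ i, (∑ j, Gbar i j * qstar j) ≤ α i)
    (hqstarOpt : ∀ q ∈ Q, (∀ i, (∑ j, Gbar i j * q j) ≤ α i) →
      (∑ j, rbar j * q j) ≤ ∑ j, rbar j * qstar j)
    (q : Fin T → Fin n → ℝ) (hq : ∀ t, q t ∈ Q) :
    ∑ t, ∑ j, μr t j * (q t j - qstar j)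
      ≤ 2 * Cr
        + (L * (m : ℝ) / ρ) *
          (⨆ i : Fin m, ∑ t, max ((∑ j, μ t i j * q t j) - α i) 0)
        + (2 * L * (m : ℝ) / ρ) * CG := by
  
  haveI : Nonempty (Fin m) := ⟨⟨0, hm⟩⟩
  have hTpos : (0:ℝ) < T := by exact_mod_cast hT
  have hTne : (T:ℝ) ≠ 0 := ne_of_gt hTpos
  have hm1 : (1:ℝ) ≤ (m:ℝ) := by exact_mod_cast hm
  set G : Fin m → (Fin n → ℝ) → ℝ := fun i p => ∑ j, Gbar i j * p j with hGdef
  set R : (Fin n → ℝ) → ℝ := fun p => ∑ j, rbar j * p j with hRdef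
  set V : ℝ := ⨆ i : Fin m, ∑ t, max ((∑ j, μ t i j * q t j) - α i) 0 with hVdef
  set E : Fin T → ℝ := fun t => ⨆ i : Fin m, ∑ j, |μ t i j - g0 j| with hEdef
  set w : Fin T → ℝ := fun t => ⨆ i : Fin m, max (G i (q t) - α i) 0 with hwdef
  -- basic bounds
  have hrbar01 : ∀ j, rbar j ∈ Set.Icc (0:ℝ) 1 := by
    intro j
    simp only [hrbar]
    constructor
    · have : 0 ≤ ∑ t, μr t j := Finset.sum_nonneg fun t _ => (hμr t j).1
      positivity
    · have h1 : ∑ t, μr t j ≤ ∑ _t : Fin T, (1:ℝ) :=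
        Finset.sum_le_sum fun t _ => (hμr t j).2
      have h2 : ∑ _t : Fin T, (1:ℝ) = (T:ℝ) := by simp
      rw [h2] at h1
      calc (1/(T:ℝ)) * ∑ t, μr t j ≤ (1/(T:ℝ)) * (T:ℝ) := by
            apply mul_le_mul_of_nonneg_left h1 (by positivity)
        _ = 1 := by field_simp
  have hRnn : ∀ p ∈ Q, 0 ≤ R p := fun p hp =>
    Finset.sum_nonneg fun j _ => mul_nonneg (hrbar01 j).1 (hQbox p hp j).1
  have hRle : ∀ p ∈ Q, R p ≤ L := by
    intro p hp
    calc R p ≤ ∑ j, p j :=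
          Finset.sum_le_sum fun j _ =>
            mul_le_of_le_one_left (hQbox p hp j).1 (hrbar01 j).2
      _ = L := hQsum p hp
  -- Slater point
  have hcont : ContinuousOn (fun p => ⨅ i : Fin m, (α i - G i p)) Q := by
    have hc : Continuous (fun p : Fin n → ℝ =>
        Finset.univ.inf' Finset.univ_nonempty (fun i => α i - G i p)) := by
      apply Continuous.finset_inf'_apply
      intro i _
      exact continuous_const.sub
        (continuous_finset_sum _ fun j _ => continuous_const.mul (continuous_apply j))
    have heq : (fun p : Fin n → ℝ => ⨅ i : Fin m, (α i - G i p)) = fun p =>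
        Finset.univ.inf' Finset.univ_nonempty (fun i => α i - G i p) := by
      funext p; rw [Finset.inf'_univ_eq_ciInf]
    rw [heq]; exact hc.continuousOn
  obtain ⟨q0, hq0Q, hq0eq⟩ := hQcpt.exists_sSup_image_eq hQne hcont
  have hq0 : ∀ i, G i q0 ≤ α i - ρ := by
    intro i
    have h1 : ρ = ⨅ i : Fin m, (α i - G i q0) := by rw [hρ, hq0eq]
    have h2 : (⨅ i : Fin m, (α i - G i q0)) ≤ α i - G i q0 :=
      ciInf_le (Set.Finite.bddBelow (Set.finite_range _)) i
    rw [← h1] at h2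
    linarith
  -- per-round Lagrangian bound
  have key : ∀ t, R (q t) - R qstar ≤ (L / ρ) * w t := by
    intro t
    have hwt : w t = ⨆ i : Fin m, max (G i (q t) - α i) 0 := by rw [hwdef]
    have hwnn : 0 ≤ w t := by
      rw [hwt]
      exact le_ciSup_of_le (Set.Finite.bddAbove (Set.finite_range _)) ⟨0, hm⟩
        (le_max_right _ _)
    have hvi : ∀ i, G i (q t) - α i ≤ w t := by
      intro i
      rw [hwt]
      exact le_trans (le_max_left _ _)
        (le_ciSup (f := fun i : Fin m => max (G i (q t) - α i) 0)
          (Set.Finite.bddAbove (Set.finite_range _)) i)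
    rcases eq_or_lt_of_le hwnn with hv0 | hvpos
    · have hfeas : ∀ i, G i (q t) ≤ α i := fun i => by
        have := hvi i; rw [← hv0] at this; linarith
      have hopt : R (q t) ≤ R qstar := hqstarOpt (q t) (hq t) hfeas
      nlinarith [mul_nonneg (le_of_lt (div_pos hL hSlater)) hwnn]
    · set v := w t with hv
      set θ := ρ / (ρ + v) with hθ
      have hρv : 0 < ρ + v := by linarith
      have hθpos : 0 < θ := div_pos hSlater hρv
      have hθle : θ ≤ 1 := by rw [hθ, div_le_one hρv]; linarith
      have h1θ : 1 - θ = v / (ρ + v) := by rw [hθ]; field_simp; ring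
      have hq'Q : θ • q t + (1 - θ) • q0 ∈ Q :=
        hQcvx (hq t) hq0Q hθpos.le (by linarith) (by ring)
      set q' := θ • q t + (1 - θ) • q0 with hq'def
      have hGq' : ∀ i, G i q' = θ * G i (q t) + (1-θ) * G i q0 := by
        intro i
        simp only [hGdef, hq'def, Pi.add_apply, Pi.smul_apply, smul_eq_mul]
        rw [Finset.mul_sum, Finset.mul_sum, ← Finset.sum_add_distrib]
        exact Finset.sum_congr rfl fun j _ => by ring
      have hRq' : R q' = θ * R (q t) + (1-θ) * R q0 := by
        simp only [hRdef, hq'def, Pi.add_apply, Pi.smul_apply, smul_eq_mul]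
        rw [Finset.mul_sum, Finset.mul_sum, ← Finset.sum_add_distrib]
        exact Finset.sum_congr rfl fun j _ => by ring
      have hfeas' : ∀ i, G i q' ≤ α i := by
        intro i
        have e1 : θ * G i (q t) ≤ θ * (α i + v) :=
          mul_le_mul_of_nonneg_left (by linarith [hvi i]) hθpos.le
        have e2 : (1-θ) * G i q0 ≤ (1-θ) * (α i - ρ) :=
          mul_le_mul_of_nonneg_left (hq0 i) (by linarith)
        have e3 : θ * (α i + v) + (1-θ)*(α i - ρ) = α i := by
          rw [hθ]; field_simp; ring
        rw [hGq' i]; linarith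
      have hopt : R q' ≤ R qstar := hqstarOpt q' hq'Q hfeas'
      have hRq0 := hRnn q0 hq0Q
      have hRqt := hRle (q t) (hq t)
      have expand : (1-θ)*(R (q t) - R q0)
          = R (q t) - (θ * R (q t) + (1-θ) * R q0) := by ring
      have step1 : R (q t) - R qstar ≤ (1 - θ) * (R (q t) - R q0) := by
        rw [expand, ← hRq']; linarith
      have step2 : (1 - θ) * (R (q t) - R q0) ≤ (1 - θ) * L :=
        mul_le_mul_of_nonneg_left (by linarith) (by linarith)
      have step3 : (1 - θ) * L ≤ (L / ρ) * v := by
        rw [h1θ, div_mul_eq_mul_div, div_mul_eq_mul_div,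
          div_le_div_iff₀ hρv hSlater]
        nlinarith [mul_nonneg hL.le hvpos.le]
      linarith
  -- corruption bound for rbar
  have hrbar_r0 : ∑ j, |rbar j - r0 j| ≤ Cr / T := by
    have hdiff : ∀ j, rbar j - r0 j = (1/(T:ℝ)) * ∑ t, (μr t j - r0 j) := by
      intro j
      simp only [hrbar]
      rw [Finset.sum_sub_distrib, Finset.sum_const, Finset.card_univ,
        Fintype.card_fin, nsmul_eq_mul]
      field_simp
    calc ∑ j, |rbar j - r0 j| ≤ ∑ j, (1/(T:ℝ)) * ∑ t, |μr t j - r0 j| := by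
          refine Finset.sum_le_sum fun j _ => ?_
          rw [hdiff j, abs_mul, abs_of_nonneg (by positivity : (0:ℝ) ≤ 1/(T:ℝ))]
          exact mul_le_mul_of_nonneg_left (Finset.abs_sum_le_sum_abs _ _)
            (by positivity)
      _ = (1/(T:ℝ)) * ∑ t, ∑ j, |μr t j - r0 j| := by
          rw [← Finset.mul_sum, Finset.sum_comm]
      _ ≤ (1/(T:ℝ)) * Cr := mul_le_mul_of_nonneg_left hcorrR (by positivity)
      _ = Cr / T := by ring
  -- corruption bound for Gbar
  have hEnn : ∀ t, 0 ≤ E t := by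
    intro t
    rw [hEdef]
    exact le_ciSup_of_le (Set.Finite.bddAbove (Set.finite_range _)) ⟨0, hm⟩
      (Finset.sum_nonneg fun j _ => abs_nonneg _)
  have hcorrG' : ∑ t, E t ≤ CG := by
    rw [hEdef]; exact hcorrG
  have hGbar_g0 : ∀ i, ∑ j, |Gbar i j - g0 j| ≤ CG / T := by
    intro i
    have hdiff : ∀ j, Gbar i j - g0 j = (1/(T:ℝ)) * ∑ t, (μ t i j - g0 j) := by
      intro j
      simp only [hGbar]
      rw [Finset.sum_sub_distrib, Finset.sum_const, Finset.card_univ,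
        Fintype.card_fin, nsmul_eq_mul]
      field_simp
    calc ∑ j, |Gbar i j - g0 j| ≤ ∑ j, (1/(T:ℝ)) * ∑ t, |μ t i j - g0 j| := by
          refine Finset.sum_le_sum fun j _ => ?_
          rw [hdiff j, abs_mul, abs_of_nonneg (by positivity : (0:ℝ) ≤ 1/(T:ℝ))]
          exact mul_le_mul_of_nonneg_left (Finset.abs_sum_le_sum_abs _ _)
            (by positivity)
      _ = (1/(T:ℝ)) * ∑ t, ∑ j, |μ t i j - g0 j| := by
          rw [← Finset.mul_sum, Finset.sum_comm]
      _ ≤ (1/(T:ℝ)) * ∑ t, E t := by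
          apply mul_le_mul_of_nonneg_left _ (by positivity)
          refine Finset.sum_le_sum fun t _ => ?_
          rw [hEdef]
          exact le_ciSup (f := fun i' : Fin m => ∑ j, |μ t i' j - g0 j|)
            (Set.Finite.bddAbove (Set.finite_range _)) i
      _ ≤ (1/(T:ℝ)) * CG := mul_le_mul_of_nonneg_left hcorrG' (by positivity)
      _ = CG / T := by ring
  have hCGT : (0:ℝ) ≤ CG / T := div_nonneg hCG hTpos.le
  -- bounding w by the empirical violations
  have keyC : ∀ t, w t ≤ (∑ i, max ((∑ j, μ t i j * q t j) - α i) 0) + (CG/T + E t) := by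
    intro t
    have hwt : w t = ⨆ i : Fin m, max (G i (q t) - α i) 0 := by rw [hwdef]
    rw [hwt]
    refine ciSup_le fun i => ?_
    have habsq : ∀ j, |q t j - 0| ≤ 1 := by
      intro j
      have h := hQbox _ (hq t) j
      rw [sub_zero, abs_le]; exact ⟨by linarith [h.1], h.2⟩
    have hd : G i (q t) - (∑ j, μ t i j * q t j) ≤ ∑ j, |Gbar i j - μ t i j| := by
      have heq2 : G i (q t) - (∑ j, μ t i j * q t j)
          = ∑ j, (Gbar i j - μ t i j) * q t j := by
        rw [← Finset.sum_sub_distrib]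
        exact Finset.sum_congr rfl fun j _ => by ring
      rw [heq2]
      refine dot_le_l1 _ _ fun j => ?_
      have h := hQbox _ (hq t) j
      rw [abs_le]; exact ⟨by linarith [h.1], h.2⟩
    have htri : ∑ j, |Gbar i j - μ t i j| ≤ CG/T + E t := by
      calc ∑ j, |Gbar i j - μ t i j|
          ≤ ∑ j, (|Gbar i j - g0 j| + |μ t i j - g0 j|) := by
            refine Finset.sum_le_sum fun j _ => ?_
            calc |Gbar i j - μ t i j| ≤ |Gbar i j - g0 j| + |g0 j - μ t i j| :=
                  abs_sub_le _ _ _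
              _ = |Gbar i j - g0 j| + |μ t i j - g0 j| := by rw [abs_sub_comm (g0 j)]
        _ = (∑ j, |Gbar i j - g0 j|) + ∑ j, |μ t i j - g0 j| :=
            Finset.sum_add_distrib
        _ ≤ CG/T + E t := by
            refine add_le_add (hGbar_g0 i) ?_
            rw [hEdef]
            exact le_ciSup (f := fun i' : Fin m => ∑ j, |μ t i' j - g0 j|)
              (Set.Finite.bddAbove (Set.finite_range _)) i
    have hsum_i : max ((∑ j, μ t i j * q t j) - α i) 0
        ≤ ∑ i', max ((∑ j, μ t i' j * q t j) - α i') 0 :=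
      Finset.single_le_sum (f := fun i' => max ((∑ j, μ t i' j * q t j) - α i') 0)
        (fun i' _ => le_max_right _ _) (Finset.mem_univ i)
    have hsumnn : (0:ℝ) ≤ ∑ i', max ((∑ j, μ t i' j * q t j) - α i') 0 :=
      Finset.sum_nonneg fun i' _ => le_max_right _ _
    rcases le_or_gt (G i (q t) - α i) 0 with h | h
    · rw [max_eq_right h]
      have := hEnn t
      linarith
    · rw [max_eq_left h.le]
      linarith [le_max_left ((∑ j, μ t i j * q t j) - α i) (0:ℝ), hsum_i, hd, htri]
  -- sum of w
  have hVnn : ∀ i : Fin m, ∑ t, max ((∑ j, μ t i j * q t j) - α i) 0 ≤ V := by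
    intro i
    rw [hVdef]
    exact le_ciSup (f := fun i : Fin m => ∑ t, max ((∑ j, μ t i j * q t j) - α i) 0)
      (Set.Finite.bddAbove (Set.finite_range _)) i
  have hsumw : ∑ t, w t ≤ (m:ℝ) * V + 2*CG := by
    calc ∑ t, w t
        ≤ ∑ t, ((∑ i, max ((∑ j, μ t i j * q t j) - α i) 0) + (CG/T + E t)) :=
          Finset.sum_le_sum fun t _ => keyC t
      _ = (∑ t, ∑ i, max ((∑ j, μ t i j * q t j) - α i) 0)
            + ((T:ℝ)*(CG/T) + ∑ t, E t) := by
          rw [Finset.sum_add_distrib, Finset.sum_add_distrib, Finset.sum_const,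
            Finset.card_univ, Fintype.card_fin, nsmul_eq_mul]
      _ ≤ (m:ℝ) * V + (CG + CG) := by
          have hTCG : (T:ℝ)*(CG/T) = CG := by field_simp
          have hswap : (∑ t, ∑ i, max ((∑ j, μ t i j * q t j) - α i) 0)
              = ∑ i, ∑ t, max ((∑ j, μ t i j * q t j) - α i) 0 := Finset.sum_comm
          have hmV : (∑ i, ∑ t, max ((∑ j, μ t i j * q t j) - α i) 0)
              ≤ ∑ _i : Fin m, V := Finset.sum_le_sum fun i _ => hVnn i
          have hconst : ∑ _i : Fin m, V = (m:ℝ) * V := by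
            rw [Finset.sum_const, Finset.card_univ, Fintype.card_fin, nsmul_eq_mul]
          rw [hswap, hTCG]
          linarith [hmV, hconst ▸ hmV, hcorrG']
      _ = (m:ℝ) * V + 2*CG := by ring
  -- the reward decomposition
  have decomp : ∀ t, ∑ j, μr t j * (q t j - qstar j)
      = (∑ j, (μr t j - rbar j) * (q t j - qstar j)) + (R (q t) - R qstar) := by
    intro t
    have hRdiff : R (q t) - R qstar = ∑ j, rbar j * (q t j - qstar j) := by
      simp only [hRdef]
      rw [← Finset.sum_sub_distrib]
      exact Finset.sum_congr rfl fun j _ => by ring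
    rw [hRdiff, ← Finset.sum_add_distrib]
    exact Finset.sum_congr rfl fun j _ => by ring
  have hrt : ∀ t, ∑ j, (μr t j - rbar j) * (q t j - qstar j)
      ≤ (∑ j, |μr t j - r0 j|) + Cr/T := by
    intro t
    calc ∑ j, (μr t j - rbar j) * (q t j - qstar j)
        ≤ ∑ j, |μr t j - rbar j| := by
          refine dot_le_l1 _ _ fun j => ?_
          have h1 := hQbox _ (hq t) j
          have h2 := hQbox _ hqstarQ j
          rw [abs_le]
          exact ⟨by linarith [h1.1, h2.2], by linarith [h1.2, h2.1]⟩
      _ ≤ ∑ j, (|μr t j - r0 j| + |rbar j - r0 j|) := by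
          refine Finset.sum_le_sum fun j _ => ?_
          calc |μr t j - rbar j| ≤ |μr t j - r0 j| + |r0 j - rbar j| :=
                abs_sub_le _ _ _
            _ = |μr t j - r0 j| + |rbar j - r0 j| := by rw [abs_sub_comm (r0 j)]
      _ = (∑ j, |μr t j - r0 j|) + ∑ j, |rbar j - r0 j| := Finset.sum_add_distrib
      _ ≤ (∑ j, |μr t j - r0 j|) + Cr/T := by linarith [hrbar_r0]
  -- put everything together
  have hLρ : (0:ℝ) ≤ L / ρ := le_of_lt (div_pos hL hSlater)
  calc ∑ t, ∑ j, μr t j * (q t j - qstar j)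
      = (∑ t, ∑ j, (μr t j - rbar j) * (q t j - qstar j))
          + ∑ t, (R (q t) - R qstar) := by
        rw [← Finset.sum_add_distrib]
        exact Finset.sum_congr rfl fun t _ => decomp t
    _ ≤ (∑ t, ((∑ j, |μr t j - r0 j|) + Cr/T)) + ∑ t, (L/ρ) * w t :=
        add_le_add (Finset.sum_le_sum fun t _ => hrt t)
          (Finset.sum_le_sum fun t _ => key t)
    _ = ((∑ t, ∑ j, |μr t j - r0 j|) + (T:ℝ)*(Cr/T)) + (L/ρ) * ∑ t, w t := by
        rw [Finset.sum_add_distrib, Finset.sum_const, Finset.card_univ,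
          Fintype.card_fin, nsmul_eq_mul, Finset.mul_sum]
    _ ≤ (Cr + Cr) + (L/ρ) * ((m:ℝ)*V + 2*CG) := by
        have hTCr : (T:ℝ)*(Cr/T) = Cr := by field_simp
        have := mul_le_mul_of_nonneg_left hsumw hLρ
        rw [hTCr]
        linarith [hcorrR]
    _ ≤ 2 * Cr + (L * (m:ℝ) / ρ) * V + (2 * L * (m:ℝ) / ρ) * CG := by
        have he1 : (L/ρ) * ((m:ℝ)*V) = (L * (m:ℝ) / ρ) * V := by ring
        have he2 : (L/ρ) * (2*CG) ≤ (2 * L * (m:ℝ) / ρ) * CG := by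
          rw [div_mul_eq_mul_div, div_mul_eq_mul_div,
            div_le_div_iff₀ hSlater hSlater]
          have hfac : 2 * L * (m:ℝ) * CG * ρ - L * (2*CG) * ρ
              = (2 * (L * CG * ρ)) * ((m:ℝ) - 1) := by ring
          have hnn : 0 ≤ (2 * (L * CG * ρ)) * ((m:ℝ) - 1) :=
            mul_nonneg
              (mul_nonneg (by norm_num)
                (mul_nonneg (mul_nonneg hL.le hCG) hSlater.le))
              (sub_nonneg.mpr hm1)
          linarith [hfac, hnn]
        have hsplit : (L/ρ) * ((m:ℝ)*V + 2*CG)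
            = (L/ρ)*((m:ℝ)*V) + (L/ρ)*(2*CG) := mul_add _ _ _
        linarith [he1, he2, hsplit]
end

section
/- (High-probability bound for the optimistic (implicit-exploration) loss estimator.) With probability at least 1 − δ: Σ_{t=1}^T ( I_t·ℓ̄_t / (w_t + γ) ) − Σ_{t=1}^T λ_t ≤ (L/(2γ))·ln(1/δ). -/
open MeasureTheory ProbabilityTheory Finset

lemma aux_log {s : ℝ} (hs : 0 ≤ s) : 2 * s / (1 + s) ≤ Real.log (1 + 2 * s) := by
  set f : ℝ → ℝ := fun x => Real.log (1 + 2 * x) - 2 * x / (1 + x) with hf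
  have hderiv : ∀ x ∈ Set.Ici (0 : ℝ),
      HasDerivAt f (2 / (1 + 2 * x) - 2 / (1 + x) ^ 2) x := by
    intro x hx
    have hx0 : (0:ℝ) ≤ x := hx
    have h1 : (1:ℝ) + 2 * x ≠ 0 := by nlinarith
    have h2 : (1:ℝ) + x ≠ 0 := by nlinarith
    have d1 : HasDerivAt (fun x : ℝ => 1 + 2 * x) 2 x := by
      simpa using ((hasDerivAt_id x).const_mul (2:ℝ)).const_add 1
    have dlog : HasDerivAt (fun x : ℝ => Real.log (1 + 2 * x)) (2 / (1 + 2 * x)) x := by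
      simpa using d1.log h1
    have d2 : HasDerivAt (fun x : ℝ => 2 * x) 2 x := by
      simpa using (hasDerivAt_id x).const_mul (2:ℝ)
    have d3 : HasDerivAt (fun x : ℝ => 1 + x) 1 x := by
      simpa using (hasDerivAt_id x).const_add (1:ℝ)
    have ddiv : HasDerivAt (fun x : ℝ => 2 * x / (1 + x))
        ((2 * (1 + x) - 2 * x * 1) / (1 + x) ^ 2) x := d2.div d3 h2
    have he : (2 * (1 + x) - 2 * x * 1) = 2 := by ring
    rw [he] at ddiv
    exact dlog.sub ddiv
  have hmono : MonotoneOn f (Set.Ici (0:ℝ)) := by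
    apply monotoneOn_of_deriv_nonneg (convex_Ici 0)
    · exact fun x hx => ((hderiv x hx).continuousAt).continuousWithinAt
    · intro x hx
      rw [interior_Ici] at hx
      exact ((hderiv x (le_of_lt (Set.mem_Ioi.mp hx))).differentiableAt).differentiableWithinAt
    · intro x hx
      rw [interior_Ici] at hx
      have hx' : (0:ℝ) < x := Set.mem_Ioi.mp hx
      rw [(hderiv x hx'.le).deriv]
      have h1 : (0:ℝ) < 1 + 2 * x := by nlinarith
      have h2 : (1:ℝ) + 2 * x ≤ (1 + x) ^ 2 := by nlinarith
      have := div_le_div_of_nonneg_left (by norm_num : (0:ℝ) ≤ 2) h1 h2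
      linarith
  have h0 : f 0 = 0 := by simp [hf]
  have := hmono (Set.self_mem_Ici) hs hs
  rw [h0] at this
  simpa [hf, sub_nonneg] using this

lemma aux_exp {η z w γ : ℝ} (hη : 0 < η) (hz : 0 ≤ z) (hzγ : η * z ≤ 2 * γ)
    (hw : 0 < w) (hγ : 0 < γ) :
    Real.exp (η * (z / (w + γ))) ≤ 1 + η * (z / w) := by
  set s : ℝ := η * z / (2 * w) with hs
  have hs0 : 0 ≤ s := by positivity
  have h2s : 2 * s = η * (z / w) := by rw [hs]; field_simp
  have h1 : η * (z / (w + γ)) ≤ 2 * s / (1 + s) := by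
    have hrw : 2 * s / (1 + s) = η * z / (w + η * z / 2) := by
      rw [hs]; field_simp
    rw [hrw, ← mul_div_assoc]
    exact div_le_div_of_nonneg_left (mul_nonneg hη.le hz)
      (by positivity) (by linarith)
  have h2 : 2 * s / (1 + s) ≤ Real.log (1 + 2 * s) := aux_log hs0
  have h3 : (0:ℝ) < 1 + 2 * s := by nlinarith
  calc Real.exp (η * (z / (w + γ))) ≤ Real.exp (Real.log (1 + 2 * s)) :=
        Real.exp_le_exp.mpr (h1.trans h2)
    _ = 1 + 2 * s := Real.exp_log h3
    _ = 1 + η * (z / w) := by rw [h2s]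

theorem optimistic_estimator_high_probability
    {Ω : Type*} [mΩ : MeasurableSpace Ω] (μ : Measure Ω) [IsProbabilityMeasure μ]
    (T : ℕ) (hT : 1 ≤ T) (L γ δ : ℝ) (hL : 0 < L) (hγ : 0 < γ)
    (hδ : δ ∈ Set.Ioo (0 : ℝ) 1)
    (𝓕 : Filtration ℕ mΩ)
    (w lam I ℓ : ℕ → Ω → ℝ)
    (hw_meas : ∀ t, Measurable[𝓕 t] (w t))
    (hw_range : ∀ t ω, w t ω ∈ Set.Ioc (0 : ℝ) 1)
    (hlam_meas : ∀ t, Measurable[𝓕 t] (lam t))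
    (hlam_range : ∀ t ω, lam t ω ∈ Set.Icc 0 L)
    (hI_meas : ∀ t, Measurable[𝓕 (t + 1)] (I t))
    (hI_range : ∀ t ω, I t ω = 0 ∨ I t ω = 1)
    (hℓ_meas : ∀ t, Measurable[𝓕 (t + 1)] (ℓ t))
    (hℓ_range : ∀ t ω, ℓ t ω ∈ Set.Icc 0 L)
    (hcond : ∀ t, μ[fun ω => I t ω * ℓ t ω | 𝓕 t] =ᵐ[μ] fun ω => w t ω * lam t ω) :
    ENNReal.ofReal (1 - δ) ≤
      μ {ω | ∑ t ∈ Finset.range T, I t ω * ℓ t ω / (w t ω + γ)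
              - ∑ t ∈ Finset.range T, lam t ω
            ≤ (L / (2 * γ)) * Real.log (1 / δ)} := by
  obtain ⟨hδ0, hδ1⟩ := hδ
  set η : ℝ := 2 * γ / L with hη_def
  have hη : 0 < η := by positivity
  -- ambient measurability
  have hwm : ∀ t, Measurable (w t) := fun t => (hw_meas t).mono (𝓕.le t) le_rfl
  have hlamm : ∀ t, Measurable (lam t) := fun t => (hlam_meas t).mono (𝓕.le t) le_rfl
  have hIm : ∀ t, Measurable (I t) := fun t => (hI_meas t).mono (𝓕.le (t+1)) le_rfl
  have hℓm : ∀ t, Measurable (ℓ t) := fun t => (hℓ_meas t).mono (𝓕.le (t+1)) le_rfl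
  set f : ℕ → Ω → ℝ := fun t ω => I t ω * ℓ t ω / (w t ω + γ) with hf_def
  have hfm : ∀ t, Measurable (f t) :=
    fun t => ((hIm t).mul (hℓm t)).div ((hwm t).add_const γ)
  -- ranges
  have hz_nonneg : ∀ t ω, 0 ≤ I t ω * ℓ t ω := by
    intro t ω
    rcases hI_range t ω with h | h <;> simp [h, (hℓ_range t ω).1]
  have hz_le : ∀ t ω, I t ω * ℓ t ω ≤ L := by
    intro t ω
    rcases hI_range t ω with h | h <;> simp [h, (hℓ_range t ω).2, hL.le]
  have hwpos : ∀ t ω, 0 < w t ω := fun t ω => (hw_range t ω).1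
  have hf_nonneg : ∀ t ω, 0 ≤ f t ω := fun t ω =>
    div_nonneg (hz_nonneg t ω) (add_pos (hwpos t ω) hγ).le
  have hf_le : ∀ t ω, f t ω ≤ L / γ := fun t ω =>
    div_le_div₀ hL.le (hz_le t ω) hγ (by linarith [hwpos t ω])
  set S : ℕ → Ω → ℝ := fun n ω => ∑ t ∈ range n, (f t ω - lam t ω) with hS_def
  set X : ℕ → Ω → ℝ := fun n ω => Real.exp (η * S n ω) with hX_def
  have hSm : ∀ n, Measurable (S n) :=
    fun n => Finset.measurable_sum _ (fun t _ => (hfm t).sub (hlamm t))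
  have hXm : ∀ n, Measurable (X n) := fun n => (measurable_const.mul (hSm n)).exp
  have hLγ : 0 < L / γ := by positivity
  have hS_bound : ∀ n ω, |S n ω| ≤ n * (L / γ + L) := by
    intro n ω
    calc |S n ω| ≤ ∑ t ∈ range n, |f t ω - lam t ω| := Finset.abs_sum_le_sum_abs _ _
      _ ≤ ∑ _t ∈ range n, (L / γ + L) := by
          apply Finset.sum_le_sum
          intro t _
          have h1 := hf_nonneg t ω
          have h2 := hf_le t ω
          have h3 := (hlam_range t ω).1
          have h4 := (hlam_range t ω).2
          rw [abs_le]
          constructor <;> linarith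
      _ = n * (L / γ + L) := by
          rw [Finset.sum_const, Finset.card_range, nsmul_eq_mul]
  have hX_pos : ∀ n ω, 0 < X n ω := fun n ω => Real.exp_pos _
  have hX_le : ∀ n ω, X n ω ≤ Real.exp (η * (n * (L / γ + L))) := by
    intro n ω
    apply Real.exp_le_exp.mpr
    exact mul_le_mul_of_nonneg_left (abs_le.mp (hS_bound n ω)).2 hη.le
  have int_bdd : ∀ (h : Ω → ℝ) (c : ℝ), AEStronglyMeasurable h μ → (∀ ω, |h ω| ≤ c) →
      Integrable h μ := fun h c hm hb =>
    Integrable.mono' (integrable_const c) hm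
      (Filter.Eventually.of_forall fun ω => by simpa [Real.norm_eq_abs] using hb ω)
  have hX_int : ∀ n, Integrable (X n) μ := fun n =>
    int_bdd _ _ (hXm n).aestronglyMeasurable
      (fun ω => by rw [abs_of_pos (hX_pos n ω)]; exact hX_le n ω)
  -- the key supermartingale bound
  have key : ∀ n, ∫ ω, X n ω ∂μ ≤ 1 := by
    intro n
    induction n with
    | zero => simp [hX_def, hS_def]
    | succ n ih =>
      set Y : Ω → ℝ := fun ω => X n ω * Real.exp (-(η * lam n ω)) with hY_def
      have hY_nonneg : ∀ ω, 0 ≤ Y ω := fun ω =>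
        mul_nonneg (hX_pos n ω).le (Real.exp_pos _).le
      set CY : ℝ := Real.exp (η * (n * (L / γ + L))) with hCY_def
      have hCY : 0 < CY := Real.exp_pos _
      have hexp1 : ∀ ω, Real.exp (-(η * lam n ω)) ≤ 1 := fun ω => by
        rw [← Real.exp_zero]
        exact Real.exp_le_exp.mpr (neg_nonpos.mpr (mul_nonneg hη.le (hlam_range n ω).1))
      have hY_le : ∀ ω, Y ω ≤ CY := fun ω =>
        le_trans (mul_le_of_le_one_right (hX_pos n ω).le (hexp1 ω)) (hX_le n ω)
      have hYm : Measurable Y :=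
        (hXm n).mul ((measurable_const.mul (hlamm n)).neg.exp)
      have hY_int : Integrable Y μ := int_bdd _ CY hYm.aestronglyMeasurable
        (fun ω => abs_le.mpr ⟨by nlinarith [hY_nonneg ω], hY_le ω⟩)
      have hfm𝓕 : ∀ t, t < n → Measurable[𝓕 n] (f t) := by
        intro t ht
        have hI' : Measurable[𝓕 n] (I t) := (hI_meas t).mono (𝓕.mono ht) le_rfl
        have hℓ' : Measurable[𝓕 n] (ℓ t) := (hℓ_meas t).mono (𝓕.mono ht) le_rfl
        have hw' : Measurable[𝓕 n] (w t) := (hw_meas t).mono (𝓕.mono ht.le) le_rfl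
        exact (hI'.mul hℓ').div (hw'.add_const γ)
      have hY_m𝓕 : Measurable[𝓕 n] Y := by
        have hS' : Measurable[𝓕 n] (S n) := by
          apply Finset.measurable_sum
          intro t ht
          exact (hfm𝓕 t (Finset.mem_range.mp ht)).sub
            ((hlam_meas t).mono (𝓕.mono (Finset.mem_range.mp ht).le) le_rfl)
        exact ((measurable_const.mul hS').exp).mul
          ((measurable_const.mul (hlam_meas n)).neg.exp)
      have hXsucc : ∀ ω, X (n+1) ω = Y ω * Real.exp (η * f n ω) := by
        intro ω
        simp only [hX_def, hY_def, hS_def]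
        rw [Finset.sum_range_succ]
        have h1 : η * ((∑ t ∈ range n, (f t ω - lam t ω)) + (f n ω - lam n ω))
            = (η * ∑ t ∈ range n, (f t ω - lam t ω)) + (-(η * lam n ω)) + η * f n ω := by
          ring
        rw [h1, Real.exp_add, Real.exp_add]
      have hpt : ∀ ω, Real.exp (η * f n ω) ≤ 1 + η * (I n ω * ℓ n ω / w n ω) := by
        intro ω
        have hzγ : η * (I n ω * ℓ n ω) ≤ 2 * γ := by
          rw [hη_def]
          calc 2 * γ / L * (I n ω * ℓ n ω) ≤ 2 * γ / L * L :=
              mul_le_mul_of_nonneg_left (hz_le n ω) (by positivity)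
            _ = 2 * γ := by field_simp
        have h := aux_exp hη (hz_nonneg n ω) hzγ (hwpos n ω) hγ
        simpa only [hf_def] using h
      have hIl_int : Integrable (fun ω => I n ω * ℓ n ω) μ :=
        int_bdd _ L ((hIm n).mul (hℓm n)).aestronglyMeasurable
          (fun ω => abs_le.mpr ⟨by nlinarith [hz_nonneg n ω], hz_le n ω⟩)
      -- pull-out property of conditional expectation, for bounded 𝓕 n-measurable g
      have hpull : ∀ (g : Ω → ℝ) (c : ℝ), Measurable[𝓕 n] g → (∀ ω, |g ω| ≤ c) →
          ∫ ω, g ω * (I n ω * ℓ n ω) ∂μ = ∫ ω, g ω * (w n ω * lam n ω) ∂μ := by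
        intro g c hgm hgb
        have hgm0 : Measurable g := hgm.mono (𝓕.le n) le_rfl
        have hprod : Integrable (g * fun ω => I n ω * ℓ n ω) μ := by
          apply int_bdd _ (|c| * L) (hgm0.mul ((hIm n).mul (hℓm n))).aestronglyMeasurable
          intro ω
          show |g ω * (I n ω * ℓ n ω)| ≤ |c| * L
          rw [abs_mul]
          apply mul_le_mul (le_trans (hgb ω) (le_abs_self c)) ?_ (abs_nonneg _)
            (abs_nonneg _)
          rw [abs_of_nonneg (hz_nonneg n ω)]
          exact hz_le n ω
        have hcm : μ[g * (fun ω => I n ω * ℓ n ω)|𝓕 n]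
            =ᵐ[μ] g * μ[(fun ω => I n ω * ℓ n ω)|𝓕 n] :=
          condExp_mul_of_stronglyMeasurable_left hgm.stronglyMeasurable hprod hIl_int
        have h2 : g * μ[(fun ω => I n ω * ℓ n ω)|𝓕 n]
            =ᵐ[μ] g * (fun ω => w n ω * lam n ω) :=
          Filter.EventuallyEq.mul (Filter.EventuallyEq.refl _ g) (hcond n)
        calc ∫ ω, g ω * (I n ω * ℓ n ω) ∂μ
            = ∫ ω, (g * fun ω => I n ω * ℓ n ω) ω ∂μ := rfl
          _ = ∫ ω, (μ[g * (fun ω => I n ω * ℓ n ω)|𝓕 n]) ω ∂μ :=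
              (integral_condExp (𝓕.le n)).symm
          _ = ∫ ω, (g * μ[(fun ω => I n ω * ℓ n ω)|𝓕 n]) ω ∂μ := integral_congr_ae hcm
          _ = ∫ ω, (g * fun ω => w n ω * lam n ω) ω ∂μ := integral_congr_ae h2
          _ = ∫ ω, g ω * (w n ω * lam n ω) ∂μ := rfl
      -- truncated coefficients
      set B : ℕ → Ω → ℝ :=
        fun k ω => Y ω + (Y ω * min (η / w n ω) (k:ℝ)) * (I n ω * ℓ n ω) with hB_def
      have hmin_nonneg : ∀ (k : ℕ) ω, 0 ≤ min (η / w n ω) (k:ℝ) := fun k ω =>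
        le_min (div_nonneg hη.le (hwpos n ω).le) (Nat.cast_nonneg k)
      have hgk_nonneg : ∀ (k : ℕ) ω, 0 ≤ Y ω * min (η / w n ω) (k:ℝ) := fun k ω =>
        mul_nonneg (hY_nonneg ω) (hmin_nonneg k ω)
      have hgk_le : ∀ (k : ℕ) ω, Y ω * min (η / w n ω) (k:ℝ) ≤ CY * k := fun k ω =>
        mul_le_mul (hY_le ω) (min_le_right _ _) (hmin_nonneg k ω) hCY.le
      have hgk_m𝓕 : ∀ k : ℕ, Measurable[𝓕 n] (fun ω => Y ω * min (η / w n ω) (k:ℝ)) :=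
        fun k => hY_m𝓕.mul ((measurable_const.div (hw_meas n)).min measurable_const)
      have hgk_m : ∀ k : ℕ, Measurable (fun ω => Y ω * min (η / w n ω) (k:ℝ)) :=
        fun k => (hgk_m𝓕 k).mono (𝓕.le n) le_rfl
      have hB_nonneg : ∀ k ω, 0 ≤ B k ω := by
        intro k ω
        simp only [hB_def]
        have := mul_nonneg (hgk_nonneg k ω) (hz_nonneg n ω)
        linarith [hY_nonneg ω]
      have hB_m : ∀ k, Measurable (B k) := by
        intro k
        simp only [hB_def]
        exact hYm.add ((hgk_m k).mul ((hIm n).mul (hℓm n)))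
      have hB_int : ∀ k : ℕ, Integrable (B k) μ := by
        intro k
        apply int_bdd _ (CY + CY * k * L) (hB_m k).aestronglyMeasurable
        intro ω
        rw [abs_of_nonneg (hB_nonneg k ω)]
        simp only [hB_def]
        have h1 : (Y ω * min (η / w n ω) (k:ℝ)) * (I n ω * ℓ n ω) ≤ (CY * k) * L :=
          mul_le_mul (hgk_le k ω) (hz_le n ω) (hz_nonneg n ω)
            (by positivity)
        have := hY_le ω
        nlinarith
      have hYlam_int : Integrable (fun ω => Y ω * (1 + η * lam n ω)) μ := by
        apply int_bdd _ (CY * (1 + η * L))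
          (hYm.mul (measurable_const.add (measurable_const.mul (hlamm n)))).aestronglyMeasurable
        intro ω
        have h1 := (hlam_range n ω).1
        have h2 := (hlam_range n ω).2
        have h3 := hY_nonneg ω
        have h4 := hY_le ω
        have h5 : (0:ℝ) ≤ 1 + η * lam n ω := by nlinarith [mul_nonneg hη.le h1]
        have h6 : 1 + η * lam n ω ≤ 1 + η * L := by nlinarith [mul_le_mul_of_nonneg_left h2 hη.le]
        show |Y ω * (1 + η * lam n ω)| ≤ _
        rw [abs_of_nonneg (mul_nonneg h3 h5)]
        exact mul_le_mul h4 h6 h5 hCY.le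
      -- integral bound for B k
      have hB_int_le : ∀ k : ℕ, ∫ ω, B k ω ∂μ ≤ ∫ ω, Y ω * (1 + η * lam n ω) ∂μ := by
        intro k
        have hgkIl_int : Integrable
            (fun ω => (Y ω * min (η / w n ω) (k:ℝ)) * (I n ω * ℓ n ω)) μ := by
          apply int_bdd _ (CY * k * L)
            ((hgk_m k).mul ((hIm n).mul (hℓm n))).aestronglyMeasurable
          intro ω
          show |(Y ω * min (η / w n ω) (k:ℝ)) * (I n ω * ℓ n ω)| ≤ _
          rw [abs_of_nonneg (mul_nonneg (hgk_nonneg k ω) (hz_nonneg n ω))]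
          exact mul_le_mul (hgk_le k ω) (hz_le n ω) (hz_nonneg n ω) (by positivity)
        have hsplit : ∫ ω, B k ω ∂μ
            = ∫ ω, Y ω ∂μ + ∫ ω, (Y ω * min (η / w n ω) (k:ℝ)) * (I n ω * ℓ n ω) ∂μ := by
          simp only [hB_def]
          exact integral_add hY_int hgkIl_int
        have hp := hpull (fun ω => Y ω * min (η / w n ω) (k:ℝ)) (CY * k) (hgk_m𝓕 k)
          (fun ω => abs_le.mpr ⟨by nlinarith [hgk_nonneg k ω, hL, hCY,
            (Nat.cast_nonneg k : (0:ℝ) ≤ k)], hgk_le k ω⟩)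
        have hgkwl_int : Integrable
            (fun ω => (Y ω * min (η / w n ω) (k:ℝ)) * (w n ω * lam n ω)) μ := by
          apply int_bdd _ (CY * k * (1 * L))
            ((hgk_m k).mul ((hwm n).mul (hlamm n))).aestronglyMeasurable
          intro ω
          have hwl0 : 0 ≤ w n ω * lam n ω :=
            mul_nonneg (hwpos n ω).le (hlam_range n ω).1
          show |(Y ω * min (η / w n ω) (k:ℝ)) * (w n ω * lam n ω)| ≤ _
          rw [abs_of_nonneg (mul_nonneg (hgk_nonneg k ω) hwl0)]
          apply mul_le_mul (hgk_le k ω) ?_ hwl0 (by positivity)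
          exact mul_le_mul (hw_range n ω).2 (hlam_range n ω).2 (hlam_range n ω).1
            (by norm_num)
        have hYηlam_int : Integrable (fun ω => Y ω * (η * lam n ω)) μ := by
          apply int_bdd _ (CY * (η * L))
            (hYm.mul (measurable_const.mul (hlamm n))).aestronglyMeasurable
          intro ω
          have h1 := (hlam_range n ω).1
          have h2 := (hlam_range n ω).2
          have h3 := hY_nonneg ω
          have h4 := hY_le ω
          have h5 : (0:ℝ) ≤ η * lam n ω := mul_nonneg hη.le h1
          have h6 : η * lam n ω ≤ η * L := mul_le_mul_of_nonneg_left h2 hη.le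
          show |Y ω * (η * lam n ω)| ≤ _
          rw [abs_of_nonneg (mul_nonneg h3 h5)]
          exact mul_le_mul h4 h6 h5 hCY.le
        have hmono2 : ∫ ω, (Y ω * min (η / w n ω) (k:ℝ)) * (w n ω * lam n ω) ∂μ
            ≤ ∫ ω, Y ω * (η * lam n ω) ∂μ := by
          apply integral_mono hgkwl_int hYηlam_int
          intro ω
          have hwne : w n ω ≠ 0 := (hwpos n ω).ne'
          have hwl0 : 0 ≤ w n ω * lam n ω :=
            mul_nonneg (hwpos n ω).le (hlam_range n ω).1
          have step1 : (Y ω * min (η / w n ω) (k:ℝ)) * (w n ω * lam n ω)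
              ≤ (Y ω * (η / w n ω)) * (w n ω * lam n ω) :=
            mul_le_mul_of_nonneg_right
              (mul_le_mul_of_nonneg_left (min_le_left _ _) (hY_nonneg ω)) hwl0
          have step2 : (Y ω * (η / w n ω)) * (w n ω * lam n ω) = Y ω * (η * lam n ω) := by
            field_simp
          calc (Y ω * min (η / w n ω) (k:ℝ)) * (w n ω * lam n ω)
              ≤ (Y ω * (η / w n ω)) * (w n ω * lam n ω) := step1
            _ = Y ω * (η * lam n ω) := step2
        have hsum : ∫ ω, Y ω ∂μ + ∫ ω, Y ω * (η * lam n ω) ∂μ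
            = ∫ ω, Y ω * (1 + η * lam n ω) ∂μ := by
          rw [← integral_add hY_int hYηlam_int]
          congr 1
          funext ω
          ring
        rw [hsplit, hp]
        linarith
      -- dominated convergence
      have hdom_m : Measurable (fun ω => Y ω * Real.exp (η * f n ω)) :=
        hYm.mul ((measurable_const.mul (hfm n)).exp)
      have hdom_int : Integrable (fun ω => Y ω * Real.exp (η * f n ω)) μ := by
        apply int_bdd _ (CY * Real.exp (η * (L / γ))) hdom_m.aestronglyMeasurable
        intro ω
        rw [abs_of_nonneg (mul_nonneg (hY_nonneg ω) (Real.exp_pos _).le)]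
        exact mul_le_mul (hY_le ω)
          (Real.exp_le_exp.mpr (mul_le_mul_of_nonneg_left (hf_le n ω) hη.le))
          (Real.exp_pos _).le hCY.le
      have hφ_nonneg : ∀ (k : ℕ) ω, 0 ≤ min (Y ω * Real.exp (η * f n ω)) (B k ω) :=
        fun k ω => le_min (mul_nonneg (hY_nonneg ω) (Real.exp_pos _).le) (hB_nonneg k ω)
      have hφ_m : ∀ k : ℕ,
          AEStronglyMeasurable (fun ω => min (Y ω * Real.exp (η * f n ω)) (B k ω)) μ :=
        fun k => (hdom_m.min (hB_m k)).aestronglyMeasurable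
      have hφ_int : ∀ k : ℕ,
          Integrable (fun ω => min (Y ω * Real.exp (η * f n ω)) (B k ω)) μ := by
        intro k
        apply Integrable.mono' hdom_int (hφ_m k)
        apply Filter.Eventually.of_forall
        intro ω
        rw [Real.norm_eq_abs, abs_of_nonneg (hφ_nonneg k ω)]
        exact min_le_left _ _
      have hB_lim : ∀ ω, Filter.Tendsto
          (fun k : ℕ => min (Y ω * Real.exp (η * f n ω)) (B k ω)) Filter.atTop
          (nhds (Y ω * Real.exp (η * f n ω))) := by
        intro ω
        apply tendsto_atTop_of_eventually_const (i₀ := Nat.ceil (η / w n ω))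
        intro k hk
        have hmin : min (η / w n ω) (k:ℝ) = η / w n ω :=
          min_eq_left (le_trans (Nat.le_ceil _) (Nat.cast_le.mpr hk))
        simp only [hB_def, hmin]
        apply min_eq_left
        have h := hpt ω
        calc Y ω * Real.exp (η * f n ω)
            ≤ Y ω * (1 + η * (I n ω * ℓ n ω / w n ω)) :=
              mul_le_mul_of_nonneg_left h (hY_nonneg ω)
          _ = Y ω + (Y ω * (η / w n ω)) * (I n ω * ℓ n ω) := by ring
      have htend := tendsto_integral_of_dominated_convergence
        (fun ω => Y ω * Real.exp (η * f n ω)) hφ_m hdom_int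
        (fun k => Filter.Eventually.of_forall (fun ω => by
          rw [Real.norm_eq_abs, abs_of_nonneg (hφ_nonneg k ω)]
          exact min_le_left _ _))
        (Filter.Eventually.of_forall hB_lim)
      have hlim_le : ∫ ω, Y ω * Real.exp (η * f n ω) ∂μ
          ≤ ∫ ω, Y ω * (1 + η * lam n ω) ∂μ := by
        apply le_of_tendsto htend
        apply Filter.Eventually.of_forall
        intro k
        exact le_trans
          (integral_mono (hφ_int k) (hB_int k) (fun ω => min_le_right _ _))
          (hB_int_le k)
      -- conclude the inductive step
      have hYexp_int : Integrable (fun ω => Y ω * Real.exp (η * lam n ω)) μ := by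
        apply int_bdd _ (CY * Real.exp (η * L))
          (hYm.mul ((measurable_const.mul (hlamm n)).exp)).aestronglyMeasurable
        intro ω
        show |Y ω * Real.exp (η * lam n ω)| ≤ _
        rw [abs_of_nonneg (mul_nonneg (hY_nonneg ω) (Real.exp_pos _).le)]
        exact mul_le_mul (hY_le ω)
          (Real.exp_le_exp.mpr (mul_le_mul_of_nonneg_left (hlam_range n ω).2 hη.le))
          (Real.exp_pos _).le hCY.le
      have h5 : ∫ ω, Y ω * (1 + η * lam n ω) ∂μ
          ≤ ∫ ω, Y ω * Real.exp (η * lam n ω) ∂μ := by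
        apply integral_mono hYlam_int hYexp_int
        intro ω
        apply mul_le_mul_of_nonneg_left ?_ (hY_nonneg ω)
        linarith [Real.add_one_le_exp (η * lam n ω)]
      have h6 : ∀ ω, Y ω * Real.exp (η * lam n ω) = X n ω := by
        intro ω
        simp only [hY_def]
        rw [mul_assoc, ← Real.exp_add, neg_add_cancel, Real.exp_zero, mul_one]
      have h7 : ∫ ω, Y ω * Real.exp (η * lam n ω) ∂μ = ∫ ω, X n ω ∂μ :=
        integral_congr_ae (Filter.Eventually.of_forall h6)
      have h8 : ∫ ω, X (n+1) ω ∂μ = ∫ ω, Y ω * Real.exp (η * f n ω) ∂μ :=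
        integral_congr_ae (Filter.Eventually.of_forall hXsucc)
      rw [h8]
      calc ∫ ω, Y ω * Real.exp (η * f n ω) ∂μ
          ≤ ∫ ω, Y ω * (1 + η * lam n ω) ∂μ := hlim_le
        _ ≤ ∫ ω, Y ω * Real.exp (η * lam n ω) ∂μ := h5
        _ = ∫ ω, X n ω ∂μ := h7
        _ ≤ 1 := ih
  -- Markov / final step
  set c : ℝ := L / (2 * γ) * Real.log (1 / δ) with hc_def
  have hLne : L ≠ 0 := hL.ne'
  have hγne : γ ≠ 0 := hγ.ne'
  have hηc : η * c = Real.log (1 / δ) := by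
    rw [hη_def, hc_def]
    field_simp
  have hmarkov := mul_meas_ge_le_integral_of_nonneg
    (Filter.Eventually.of_forall fun ω => (hX_pos T ω).le) (hX_int T) (1/δ)
  have hsub : {ω | ¬ (S T ω ≤ c)} ⊆ {x | 1/δ ≤ X T x} := by
    intro ω hω
    simp only [Set.mem_setOf_eq, not_le] at hω ⊢
    have h1 : (1:ℝ)/δ = Real.exp (η * c) := by
      rw [hηc, Real.exp_log (by positivity)]
    rw [h1]
    simp only [hX_def]
    exact Real.exp_le_exp.mpr (mul_le_mul_of_nonneg_left hω.le hη.le)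
  have h7 : (μ {x | 1/δ ≤ X T x}).toReal ≤ δ := by
    have h8 : (1/δ) * (μ {x | 1/δ ≤ X T x}).toReal ≤ 1 := le_trans hmarkov (key T)
    have h9 : (0:ℝ) ≤ (μ {x | 1/δ ≤ X T x}).toReal := ENNReal.toReal_nonneg
    have h10 : (μ {x | 1/δ ≤ X T x}).toReal
        = δ * ((1/δ) * (μ {x | 1/δ ≤ X T x}).toReal) := by
      field_simp
    calc (μ {x | 1/δ ≤ X T x}).toReal
        = δ * ((1/δ) * (μ {x | 1/δ ≤ X T x}).toReal) := h10
      _ ≤ δ * 1 := mul_le_mul_of_nonneg_left h8 hδ0.le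
      _ = δ := mul_one δ
  have hcompl_le : μ {ω | ¬ (S T ω ≤ c)} ≤ ENNReal.ofReal δ := by
    rw [ENNReal.le_ofReal_iff_toReal_le (measure_ne_top μ _) hδ0.le]
    exact le_trans (ENNReal.toReal_mono (measure_ne_top μ _) (measure_mono hsub)) h7
  have hGm : MeasurableSet {ω | S T ω ≤ c} := measurableSet_le (hSm T) measurable_const
  have hGoal_eq : {ω | ∑ t ∈ Finset.range T, I t ω * ℓ t ω / (w t ω + γ)
      - ∑ t ∈ Finset.range T, lam t ω ≤ L / (2 * γ) * Real.log (1 / δ)}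
      = {ω | S T ω ≤ c} := by
    ext ω
    simp only [Set.mem_setOf_eq, hS_def, hc_def, hf_def, Finset.sum_sub_distrib]
  rw [hGoal_eq]
  have hadd := measure_add_measure_compl (μ := μ) hGm
  rw [measure_univ] at hadd
  have hstep : ENNReal.ofReal (1 - δ) + ENNReal.ofReal δ
      ≤ μ {ω | S T ω ≤ c} + ENNReal.ofReal δ := by
    rw [← ENNReal.ofReal_add (by linarith) hδ0.le]
    have he : (1 - δ + δ : ℝ) = 1 := by ring
    rw [he, ENNReal.ofReal_one]
    have hc2 : μ ({ω | S T ω ≤ c}ᶜ) ≤ ENNReal.ofReal δ := hcompl_le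
    calc (1:ENNReal) = μ {ω | S T ω ≤ c} + μ ({ω | S T ω ≤ c}ᶜ) := hadd.symm
      _ ≤ μ {ω | S T ω ≤ c} + ENNReal.ofReal δ := add_le_add le_rfl hc2
  exact (ENNReal.add_le_add_iff_right ENNReal.ofReal_ne_top).mp hstep
end

section
/- (Bias of the weighted optimistic estimator plus Azuma.) With probability at least 1 − δ: Σ_{t=1}^T Σ_{j=1}^M w_{t,j}·λ_{t,j} − Σ_{t=1}^T ( w_{t,j_t} / (w_{t,j_t} + γ) )·ℓ̄_t ≤ γ·T·L·M + L·√(2·T·ln(1/δ)). -/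
/-!
Statement 16 (Bias of the weighted optimistic estimator plus Azuma).
With probability at least `1 − δ`:
`Σ_t Σ_j w_{t,j} λ_{t,j} − Σ_t (w_{t,j_t}/(w_{t,j_t} + γ)) ℓ̄_t
  ≤ γ T L M + L √(2 T ln(1/δ))`.
(Episodes are indexed by `0, …, T−1` here, so `𝓕 t` plays the role of `𝓕_{t-1}` and
`𝓕 (t+1)` the role of `𝓕_t`.)
-/

open MeasureTheory ProbabilityTheory Finset

lemma bdd_integrable {Ω : Type*} [MeasurableSpace Ω] {μ : Measure Ω} [IsFiniteMeasure μ]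
    {f : Ω → ℝ} (hf : AEStronglyMeasurable f μ) {C : ℝ} (h : ∀ ω, |f ω| ≤ C) :
    Integrable f μ :=
  ⟨hf, HasFiniteIntegral.of_bounded (C := C) (ae_of_all _ (by simpa [Real.norm_eq_abs] using h))⟩

lemma exp_le_affine {c x : ℝ} (hc : 0 < c) (hx : |x| ≤ c) :
    Real.exp x ≤ Real.cosh c + (x / c) * Real.sinh c := by
  obtain ⟨h1, h2⟩ := abs_le.1 hx
  have ha : (0:ℝ) ≤ (c - x) / (2 * c) := div_nonneg (by linarith) (by linarith)
  have hb : (0:ℝ) ≤ (c + x) / (2 * c) := div_nonneg (by linarith) (by linarith)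
  have hab : (c - x) / (2 * c) + (c + x) / (2 * c) = 1 := by field_simp; ring
  have h := convexOn_exp.2 (Set.mem_univ (-c)) (Set.mem_univ c) ha hb hab
  have hxeq : ((c - x) / (2 * c)) • (-c) + ((c + x) / (2 * c)) • c = x := by
    simp only [smul_eq_mul]
    field_simp
    ring
  rw [hxeq] at h
  refine h.trans (le_of_eq ?_)
  rw [Real.cosh_eq, Real.sinh_eq]
  simp only [smul_eq_mul]
  set u := Real.exp c
  set v := Real.exp (-c)
  field_simp
  ring

lemma azuma_mgf {Ω : Type*} [mΩ : MeasurableSpace Ω] (μ : Measure Ω) [IsProbabilityMeasure μ]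
    (𝓕 : Filtration ℕ mΩ) (Y : ℕ → Ω → ℝ) (L s : ℝ) (hL : 0 < L) (hs : 0 < s)
    (hmeas : ∀ t, Measurable[𝓕 (t + 1)] (Y t))
    (habs : ∀ t ω, |Y t ω| ≤ L)
    (hcond : ∀ t, μ[Y t | 𝓕 t] =ᵐ[μ] 0) :
    ∀ n : ℕ, ∫ ω, Real.exp (s * ∑ t ∈ range n, Y t ω) ∂μ
      ≤ Real.exp (s ^ 2 * L ^ 2 / 2) ^ n := by
  set K := Real.exp (s ^ 2 * L ^ 2 / 2) with hKdef
  have hK0 : 0 < K := Real.exp_pos _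
  have hc : 0 < s * L := mul_pos hs hL
  have hYmeas : ∀ t, Measurable (Y t) := fun t => (hmeas t).mono (𝓕.le (t + 1)) le_rfl
  have hYint : ∀ t, Integrable (Y t) μ :=
    fun t => bdd_integrable (hYmeas t).aestronglyMeasurable (habs t)
  -- conditional mgf bound for a single increment
  have hG : ∀ t, μ[fun ω => Real.exp (s * Y t ω) | 𝓕 t] ≤ᵐ[μ] fun _ => K := by
    intro t
    set c := s * L with hcdef
    set H : Ω → ℝ := fun ω => Real.cosh c + (s * Real.sinh c / c) * Y t ω with hHdef
    have hpt : ∀ ω, Real.exp (s * Y t ω) ≤ H ω := by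
      intro ω
      have habs' : |s * Y t ω| ≤ c := by
        rw [abs_mul, abs_of_pos hs]
        exact mul_le_mul_of_nonneg_left (habs t ω) hs.le
      have := exp_le_affine hc habs'
      calc Real.exp (s * Y t ω) ≤ Real.cosh c + (s * Y t ω / c) * Real.sinh c := this
        _ = H ω := by rw [hHdef]; ring
    have hGmeas : Measurable fun ω => Real.exp (s * Y t ω) :=
      Real.measurable_exp.comp ((hYmeas t).const_mul s)
    have hGbd : ∀ ω, |Real.exp (s * Y t ω)| ≤ Real.exp c := by
      intro ω
      rw [abs_of_pos (Real.exp_pos _)]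
      apply Real.exp_le_exp.2
      calc s * Y t ω ≤ |s * Y t ω| := le_abs_self _
        _ ≤ c := by
            rw [abs_mul, abs_of_pos hs]
            exact mul_le_mul_of_nonneg_left (habs t ω) hs.le
    have hGint : Integrable (fun ω => Real.exp (s * Y t ω)) μ :=
      bdd_integrable hGmeas.aestronglyMeasurable hGbd
    have hHint : Integrable H μ := by
      have h' : Integrable (fun ω => Real.cosh c + (s * Real.sinh c / c) * Y t ω) μ :=
        (integrable_const (Real.cosh c)).add ((hYint t).const_mul (s * Real.sinh c / c))
      exact h'
    have hmono := condExp_mono (μ := μ) (m := 𝓕 t) hGint hHint (ae_of_all _ hpt)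
    have hHce : μ[H | 𝓕 t] =ᵐ[μ] fun _ => Real.cosh c := by
      have hHeq : H = (fun _ => Real.cosh c) + (s * Real.sinh c / c) • Y t := by
        funext ω; simp [hHdef]
      rw [hHeq]
      refine (condExp_add (integrable_const _) ((hYint t).smul _) _).trans ?_
      have h1 : μ[(fun _ => Real.cosh c : Ω → ℝ) | 𝓕 t] = fun _ => Real.cosh c :=
        condExp_const (𝓕.le t) _
      have h2 : μ[(s * Real.sinh c / c) • Y t | 𝓕 t] =ᵐ[μ] (s * Real.sinh c / c) • μ[Y t | 𝓕 t] :=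
        condExp_smul _ _ _
      rw [h1]
      filter_upwards [h2, hcond t] with ω hω2 hω0
      simp only [Pi.add_apply, Pi.smul_apply, smul_eq_mul] at *
      rw [hω2, hω0]
      simp
    have hcoshK : Real.cosh c ≤ K := by
      have := Real.cosh_le_exp_half_sq c
      rw [hKdef]
      convert this using 2
      rw [hcdef]; ring
    filter_upwards [hmono, hHce] with ω h1 h2
    exact le_trans (le_of_le_of_eq h1 h2) hcoshK
  -- induction
  intro n
  induction n with
  | zero => simp
  | succ n ih =>
    set F : Ω → ℝ := fun ω => Real.exp (s * ∑ t ∈ range n, Y t ω) with hFdef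
    set G : Ω → ℝ := fun ω => Real.exp (s * Y n ω) with hGdef
    have hSabs : ∀ ω, |∑ t ∈ range n, Y t ω| ≤ n * L := by
      intro ω
      calc |∑ t ∈ range n, Y t ω| ≤ ∑ t ∈ range n, |Y t ω| := Finset.abs_sum_le_sum_abs _ _
        _ ≤ ∑ _t ∈ range n, L := Finset.sum_le_sum fun t _ => habs t ω
        _ = n * L := by simp [mul_comm]
    have hsum : Measurable[𝓕 n] fun ω => ∑ t ∈ range n, Y t ω :=
      Finset.measurable_sum _ fun t ht =>
        (hmeas t).mono (𝓕.mono (Finset.mem_range.1 ht)) le_rfl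
    have hFm : Measurable[𝓕 n] F := by
      have h2 : Measurable[𝓕 n] fun ω => s * ∑ t ∈ range n, Y t ω := hsum.const_mul s
      exact Real.measurable_exp.comp h2
    have hFmeas : Measurable F := hFm.mono (𝓕.le n) le_rfl
    have hFbd : ∀ ω, |F ω| ≤ Real.exp (s * (n * L)) := by
      intro ω
      rw [hFdef, abs_of_pos (Real.exp_pos _)]
      apply Real.exp_le_exp.2
      apply mul_le_mul_of_nonneg_left _ hs.le
      exact (le_abs_self _).trans (hSabs ω)
    have hFpos : ∀ ω, 0 < F ω := fun ω => Real.exp_pos _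
    have hGmeas : Measurable G := Real.measurable_exp.comp ((hYmeas n).const_mul s)
    have hGbd : ∀ ω, |G ω| ≤ Real.exp (s * L) := by
      intro ω
      rw [hGdef, abs_of_pos (Real.exp_pos _)]
      apply Real.exp_le_exp.2
      calc s * Y n ω ≤ |s * Y n ω| := le_abs_self _
        _ ≤ s * L := by
            rw [abs_mul, abs_of_pos hs]
            exact mul_le_mul_of_nonneg_left (habs n ω) hs.le
    have hGint : Integrable G μ := bdd_integrable hGmeas.aestronglyMeasurable hGbd
    have hFGint : Integrable (F * G) μ := by
      refine bdd_integrable (hFmeas.mul hGmeas).aestronglyMeasurable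
        (C := Real.exp (s * (n * L)) * Real.exp (s * L)) fun ω => ?_
      rw [Pi.mul_apply, abs_mul]
      exact mul_le_mul (hFbd ω) (hGbd ω) (abs_nonneg _) (Real.exp_pos _).le
    have hFint : Integrable F μ := bdd_integrable hFmeas.aestronglyMeasurable hFbd
    have hstep : ∫ ω, Real.exp (s * ∑ t ∈ range (n + 1), Y t ω) ∂μ = ∫ ω, (F * G) ω ∂μ := by
      refine integral_congr_ae (ae_of_all _ fun ω => ?_)
      simp only [Pi.mul_apply, hFdef, hGdef, Finset.sum_range_succ, mul_add, Real.exp_add]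
    rw [hstep]
    have hpull : μ[F * G | 𝓕 n] =ᵐ[μ] F * μ[G | 𝓕 n] :=
      condExp_stronglyMeasurable_mul_of_bound (𝓕.le n) hFm.stronglyMeasurable hGint
        (Real.exp (s * (n * L))) (ae_of_all _ fun ω => by
          simpa [Real.norm_eq_abs] using hFbd ω)
    have hcondGint : Integrable (fun ω => F ω * (μ[G | 𝓕 n]) ω) μ :=
      Integrable.bdd_mul integrable_condExp hFmeas.aestronglyMeasurable
        (ae_of_all _ fun ω => by simpa [Real.norm_eq_abs] using hFbd ω)
    calc ∫ ω, (F * G) ω ∂μ = ∫ ω, (μ[F * G | 𝓕 n]) ω ∂μ := (integral_condExp (𝓕.le n)).symm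
      _ = ∫ ω, F ω * (μ[G | 𝓕 n]) ω ∂μ := integral_congr_ae hpull
      _ ≤ ∫ ω, F ω * K ∂μ := by
          refine integral_mono_ae hcondGint (hFint.mul_const K) ?_
          filter_upwards [hG n] with ω hω
          exact mul_le_mul_of_nonneg_left hω (hFpos ω).le
      _ = K * ∫ ω, F ω ∂μ := by rw [integral_mul_const]; ring
      _ ≤ K * K ^ n := mul_le_mul_of_nonneg_left ih hK0.le
      _ = K ^ (n + 1) := by ring

theorem weighted_optimistic_estimator_bias
    {Ω : Type*} [mΩ : MeasurableSpace Ω] (μ : Measure Ω) [IsProbabilityMeasure μ]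
    (T M : ℕ) (hT : 1 ≤ T) (hM : 1 ≤ M) (L γ δ : ℝ) (hL : 0 < L) (hγ : 0 ≤ γ)
    (hδ : δ ∈ Set.Ioo (0 : ℝ) 1)
    (𝓕 : Filtration ℕ mΩ)
    (w : ℕ → Ω → Fin M → ℝ) (lam : ℕ → Ω → Fin M → ℝ)
    (jt : ℕ → Ω → Fin M) (ℓ : ℕ → Ω → ℝ)
    (hw_meas : ∀ t, Measurable[𝓕 t] (w t))
    (hw_pos : ∀ t ω j, 0 < w t ω j)
    (hw_sum : ∀ t ω, ∑ j, w t ω j = 1)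
    (hlam_meas : ∀ t, Measurable[𝓕 t] (lam t))
    (hlam_range : ∀ t ω j, lam t ω j ∈ Set.Icc 0 L)
    (hjt_meas : ∀ t, Measurable[𝓕 (t + 1)] (jt t))
    (hℓ_meas : ∀ t, Measurable[𝓕 (t + 1)] (ℓ t))
    (hℓ_range : ∀ t ω, ℓ t ω ∈ Set.Icc 0 L)
    (hcond : ∀ t (j : Fin M),
      μ[fun ω => (if jt t ω = j then (1 : ℝ) else 0) * ℓ t ω | 𝓕 t]
        =ᵐ[μ] fun ω => w t ω j * lam t ω j) :
    ENNReal.ofReal (1 - δ) ≤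
      μ {ω | ∑ t ∈ Finset.range T, ∑ j, w t ω j * lam t ω j
              - ∑ t ∈ Finset.range T,
                  (w t ω (jt t ω) / (w t ω (jt t ω) + γ)) * ℓ t ω
            ≤ γ * T * L * M + L * Real.sqrt (2 * T * Real.log (1 / δ))} := by
  obtain ⟨hδ0, hδ1⟩ := hδ
  have hT' : (0:ℝ) < T := by exact_mod_cast Nat.lt_of_lt_of_le Nat.zero_lt_one hT
  have hlog : 0 < Real.log (1 / δ) := Real.log_pos (by rw [lt_div_iff₀ hδ0]; linarith)
  set a : ℝ := L * Real.sqrt (2 * T * Real.log (1 / δ)) with hadef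
  have hx0 : (0:ℝ) ≤ 2 * T * Real.log (1 / δ) := by positivity
  have ha : 0 < a := mul_pos hL (Real.sqrt_pos.2 (by positivity))
  set s : ℝ := a / (T * L ^ 2) with hsdef
  have hs : 0 < s := div_pos ha (by positivity)
  -- basic facts about w
  have hw_le_one : ∀ t ω j, w t ω j ≤ 1 := by
    intro t ω j
    rw [← hw_sum t ω]
    exact Finset.single_le_sum (fun i _ => (hw_pos t ω i).le) (Finset.mem_univ j)
  have hwγ_pos : ∀ t ω j, 0 < w t ω j + γ := fun t ω j => by
    have := hw_pos t ω j; linarith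
  have hfrac01 : ∀ t ω j, 0 ≤ w t ω j / (w t ω j + γ) ∧ w t ω j / (w t ω j + γ) ≤ 1 := by
    intro t ω j
    constructor
    · exact div_nonneg (hw_pos t ω j).le (hwγ_pos t ω j).le
    · rw [div_le_one (hwγ_pos t ω j)]; linarith
  -- the estimator and its conditional expectation
  set Z : ℕ → Ω → ℝ := fun t ω => w t ω (jt t ω) / (w t ω (jt t ω) + γ) * ℓ t ω with hZdef
  set C : ℕ → Ω → ℝ :=
    fun t ω => ∑ j, w t ω j / (w t ω j + γ) * (w t ω j * lam t ω j) with hCdef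
  -- measurability
  have hwj_meas : ∀ t (j : Fin M), Measurable[𝓕 t] fun ω => w t ω j :=
    fun t j => (measurable_pi_apply j).comp (hw_meas t)
  have hlamj_meas : ∀ t (j : Fin M), Measurable[𝓕 t] fun ω => lam t ω j :=
    fun t j => (measurable_pi_apply j).comp (hlam_meas t)
  have hfrac_meas : ∀ t (j : Fin M), Measurable[𝓕 t] fun ω => w t ω j / (w t ω j + γ) :=
    fun t j => (hwj_meas t j).div ((hwj_meas t j).add_const γ)
  have hC_meas : ∀ t, Measurable[𝓕 t] (C t) := by
    intro t
    exact Finset.measurable_sum _ fun j _ =>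
      (hfrac_meas t j).mul ((hwj_meas t j).mul (hlamj_meas t j))
  have hwjt_meas : ∀ t, Measurable[𝓕 (t + 1)] fun ω => w t ω (jt t ω) := by
    intro t
    have heq : (fun ω => w t ω (jt t ω))
        = fun ω => ∑ j, if jt t ω = j then w t ω j else 0 := by
      funext ω; simp
    rw [heq]
    refine Finset.measurable_sum _ fun j _ => Measurable.ite ?_ ?_ measurable_const
    · exact hjt_meas t (measurableSet_singleton j)
    · exact (hwj_meas t j).mono (𝓕.mono (Nat.le_succ t)) le_rfl
  have hZ_meas : ∀ t, Measurable[𝓕 (t + 1)] (Z t) := by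
    intro t
    exact (((hwjt_meas t).div ((hwjt_meas t).add_const γ)).mul (hℓ_meas t))
  -- ranges
  have hZ_range : ∀ t ω, 0 ≤ Z t ω ∧ Z t ω ≤ L := by
    intro t ω
    obtain ⟨h0, h1⟩ := hfrac01 t ω (jt t ω)
    obtain ⟨hl0, hl1⟩ := hℓ_range t ω
    constructor
    · exact mul_nonneg h0 hl0
    · calc w t ω (jt t ω) / (w t ω (jt t ω) + γ) * ℓ t ω ≤ 1 * ℓ t ω :=
            mul_le_mul_of_nonneg_right h1 hl0
        _ = ℓ t ω := one_mul _
        _ ≤ L := hl1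
  have hC_range : ∀ t ω, 0 ≤ C t ω ∧ C t ω ≤ L := by
    intro t ω
    constructor
    · refine Finset.sum_nonneg fun j _ => ?_
      exact mul_nonneg (hfrac01 t ω j).1
        (mul_nonneg (hw_pos t ω j).le (hlam_range t ω j).1)
    · calc C t ω ≤ ∑ j, w t ω j * L := by
            refine Finset.sum_le_sum fun j _ => ?_
            calc w t ω j / (w t ω j + γ) * (w t ω j * lam t ω j)
                ≤ 1 * (w t ω j * lam t ω j) := by
                  refine mul_le_mul_of_nonneg_right (hfrac01 t ω j).2 ?_
                  exact mul_nonneg (hw_pos t ω j).le (hlam_range t ω j).1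
              _ = w t ω j * lam t ω j := one_mul _
              _ ≤ w t ω j * L := mul_le_mul_of_nonneg_left (hlam_range t ω j).2
                    (hw_pos t ω j).le
        _ = (∑ j, w t ω j) * L := by rw [Finset.sum_mul]
        _ = L := by rw [hw_sum t ω, one_mul]
  -- integrability
  have hZ_int : ∀ t, Integrable (Z t) μ := by
    intro t
    refine bdd_integrable ((hZ_meas t).mono (𝓕.le (t+1)) le_rfl).aestronglyMeasurable
      (C := L) fun ω => ?_
    obtain ⟨h0, h1⟩ := hZ_range t ω
    rw [abs_of_nonneg h0]; exact h1
  have hC_int : ∀ t, Integrable (C t) μ := by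
    intro t
    refine bdd_integrable ((hC_meas t).mono (𝓕.le t) le_rfl).aestronglyMeasurable
      (C := L) fun ω => ?_
    obtain ⟨h0, h1⟩ := hC_range t ω
    rw [abs_of_nonneg h0]; exact h1
  -- conditional expectation of Z
  have hcondZ : ∀ t, μ[Z t | 𝓕 t] =ᵐ[μ] C t := by
    intro t
    set g : Fin M → Ω → ℝ := fun j ω => (if jt t ω = j then (1:ℝ) else 0) * ℓ t ω with hgdef
    have hg_meas : ∀ j, Measurable (g j) := by
      intro j
      refine Measurable.mul ?_ ((hℓ_meas t).mono (𝓕.le (t+1)) le_rfl)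
      exact Measurable.ite ((hjt_meas t).mono (𝓕.le (t+1)) le_rfl
        (measurableSet_singleton j)) measurable_const measurable_const
    have hg_int : ∀ j, Integrable (g j) μ := by
      intro j
      refine bdd_integrable (hg_meas j).aestronglyMeasurable (C := L) fun ω => ?_
      obtain ⟨hl0, hl1⟩ := hℓ_range t ω
      show |(if jt t ω = j then (1:ℝ) else 0) * ℓ t ω| ≤ L
      by_cases h : jt t ω = j
      · rw [if_pos h, one_mul, abs_of_nonneg hl0]; exact hl1
      · rw [if_neg h, zero_mul, abs_zero]; exact hL.le
    set F : Fin M → Ω → ℝ := fun j ω => w t ω j / (w t ω j + γ) * g j ω with hFdef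
    have hF_int : ∀ j ∈ Finset.univ, Integrable (F j) μ := by
      intro j _
      refine bdd_integrable
        ((((hfrac_meas t j).mono (𝓕.le t) le_rfl)).mul (hg_meas j)).aestronglyMeasurable
        (C := L) fun ω => ?_
      rw [hFdef, abs_mul]
      calc |w t ω j / (w t ω j + γ)| * |g j ω| ≤ 1 * L := by
            refine mul_le_mul ?_ ?_ (abs_nonneg _) zero_le_one
            · rw [abs_of_nonneg (hfrac01 t ω j).1]; exact (hfrac01 t ω j).2
            · obtain ⟨hl0, hl1⟩ := hℓ_range t ω
              show |(if jt t ω = j then (1:ℝ) else 0) * ℓ t ω| ≤ L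
              by_cases h : jt t ω = j
              · rw [if_pos h, one_mul, abs_of_nonneg hl0]; exact hl1
              · rw [if_neg h, zero_mul, abs_zero]; exact hL.le
        _ = L := one_mul _
    have hZeq : Z t = ∑ j, F j := by
      funext ω
      rw [Finset.sum_apply]
      simp only [hFdef, hgdef, mul_ite, mul_one, mul_zero, ite_mul, zero_mul]
      rw [Finset.sum_ite_eq]
      simp
      rfl
    have h1 : μ[Z t | 𝓕 t] =ᵐ[μ] ∑ j, μ[F j | 𝓕 t] := by
      rw [hZeq]; exact condExp_finsetSum hF_int _
    have hje : ∀ j : Fin M, μ[F j | 𝓕 t]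
        =ᵐ[μ] fun ω => w t ω j / (w t ω j + γ) * (w t ω j * lam t ω j) := by
      intro j
      have hpull := condExp_stronglyMeasurable_mul_of_bound (𝓕.le t)
        (hfrac_meas t j).stronglyMeasurable (hg_int j) 1
        (ae_of_all _ fun ω => by
          rw [Real.norm_eq_abs, abs_of_nonneg (hfrac01 t ω j).1]; exact (hfrac01 t ω j).2)
      refine hpull.trans ?_
      filter_upwards [hcond t j] with ω hω
      rw [Pi.mul_apply, hω]
    have h2 : (∑ j, μ[F j | 𝓕 t] : Ω → ℝ) =ᵐ[μ] C t := by
      have hall := ae_all_iff.2 hje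
      filter_upwards [hall] with ω hω
      rw [Finset.sum_apply, hCdef]
      exact Finset.sum_congr rfl fun j _ => hω j
    exact h1.trans h2
  -- the martingale increments
  set Y : ℕ → Ω → ℝ := fun t ω => C t ω - Z t ω with hYdef
  have hY_meas : ∀ t, Measurable[𝓕 (t + 1)] (Y t) := by
    intro t
    exact ((hC_meas t).mono (𝓕.mono (Nat.le_succ t)) le_rfl).sub (hZ_meas t)
  have hY_abs : ∀ t ω, |Y t ω| ≤ L := by
    intro t ω
    obtain ⟨hc0, hc1⟩ := hC_range t ω
    obtain ⟨hz0, hz1⟩ := hZ_range t ω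
    rw [abs_le]; constructor <;> simp [hYdef] <;> linarith
  have hY_cond : ∀ t, μ[Y t | 𝓕 t] =ᵐ[μ] 0 := by
    intro t
    have hsub : μ[Y t | 𝓕 t] =ᵐ[μ] μ[C t | 𝓕 t] - μ[Z t | 𝓕 t] :=
      condExp_sub (hC_int t) (hZ_int t) _
    have hCc : μ[C t | 𝓕 t] = C t :=
      condExp_of_stronglyMeasurable (𝓕.le t) (hC_meas t).stronglyMeasurable (hC_int t)
    filter_upwards [hsub, hcondZ t] with ω h1 h2
    rw [Pi.zero_apply, h1, Pi.sub_apply, hCc, h2, sub_self]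
  -- Azuma mgf bound and Chernoff
  set X : Ω → ℝ := fun ω => ∑ t ∈ range T, Y t ω with hXdef
  have hX_meas : Measurable X :=
    Finset.measurable_sum _ fun t _ => (hY_meas t).mono (𝓕.le (t+1)) le_rfl
  have hX_abs : ∀ ω, |X ω| ≤ T * L := by
    intro ω
    calc |X ω| ≤ ∑ t ∈ range T, |Y t ω| := Finset.abs_sum_le_sum_abs _ _
      _ ≤ ∑ _t ∈ range T, L := Finset.sum_le_sum fun t _ => hY_abs t ω
      _ = T * L := by simp [mul_comm]
  have h_int : Integrable (fun ω => Real.exp (s * X ω)) μ := by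
    refine bdd_integrable (Real.measurable_exp.comp (hX_meas.const_mul s)).aestronglyMeasurable
      (C := Real.exp (s * (T * L))) fun ω => ?_
    rw [abs_of_pos (Real.exp_pos _)]
    apply Real.exp_le_exp.2
    exact mul_le_mul_of_nonneg_left ((le_abs_self _).trans (hX_abs ω)) hs.le
  have hmgf := azuma_mgf μ 𝓕 Y L s hL hs hY_meas hY_abs hY_cond T
  have hchern := measure_ge_le_exp_mul_mgf (μ := μ) (X := X) (t := s) a hs.le h_int
  have hmgf_eq : mgf X μ s = ∫ ω, Real.exp (s * X ω) ∂μ := rfl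
  -- arithmetic: exp(-s*a) * K^T = δ
  have ha2 : a ^ 2 = L ^ 2 * (2 * T * Real.log (1 / δ)) := by
    rw [hadef, mul_pow, Real.sq_sqrt hx0]
  have hTL : (T:ℝ) * L ^ 2 ≠ 0 := by positivity
  have hsa : s * a = 2 * Real.log (1 / δ) := by
    rw [hsdef, div_mul_eq_mul_div, mul_comm a a, ← sq, ha2]
    field_simp
  have hs2 : (T:ℝ) * (s ^ 2 * L ^ 2 / 2) = Real.log (1 / δ) := by
    rw [hsdef, div_pow, ha2]
    field_simp
  have hlogδ : Real.log (1 / δ) = -Real.log δ := by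
    rw [one_div, Real.log_inv]
  have hKT : Real.exp (-s * a) * Real.exp (s ^ 2 * L ^ 2 / 2) ^ T = δ := by
    rw [← Real.exp_nat_mul, ← Real.exp_add]
    rw [show -s * a + T * (s ^ 2 * L ^ 2 / 2) = -(s*a) + T * (s ^ 2 * L ^ 2 / 2) by ring,
      hsa, hs2, hlogδ]
    rw [show -(2 * -Real.log δ) + -Real.log δ = Real.log δ by ring]
    exact Real.exp_log hδ0
  have htail : (μ {ω | a ≤ X ω}).toReal ≤ δ := by
    calc (μ {ω | a ≤ X ω}).toReal ≤ Real.exp (-s * a) * mgf X μ s := hchern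
      _ ≤ Real.exp (-s * a) * Real.exp (s ^ 2 * L ^ 2 / 2) ^ T := by
          rw [hmgf_eq]
          exact mul_le_mul_of_nonneg_left hmgf (Real.exp_pos _).le
      _ = δ := hKT
  set B : Set Ω := {ω | a ≤ X ω} with hBdef
  have hB_meas : MeasurableSet B := measurableSet_le measurable_const hX_meas
  have hμB : μ B ≤ ENNReal.ofReal δ :=
    (ENNReal.le_ofReal_iff_toReal_le (measure_ne_top μ B) hδ0.le).2 htail
  -- deterministic bound on the bias
  have hdet : ∀ ω, ∑ t ∈ range T, ∑ j, w t ω j * lam t ω j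
      - ∑ t ∈ range T, C t ω ≤ γ * T * L * M := by
    intro ω
    have hper : ∀ t, (∑ j, w t ω j * lam t ω j) - C t ω ≤ γ * L * M := by
      intro t
      rw [hCdef, ← Finset.sum_sub_distrib]
      calc ∑ j, (w t ω j * lam t ω j - w t ω j / (w t ω j + γ) * (w t ω j * lam t ω j))
          ≤ ∑ _j : Fin M, γ * L := by
            refine Finset.sum_le_sum fun j _ => ?_
            have hwγ := hwγ_pos t ω j
            have hw1 := hw_le_one t ω j
            have hw0 := hw_pos t ω j
            obtain ⟨hl0, hl1⟩ := hlam_range t ω j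
            have heq : w t ω j * lam t ω j - w t ω j / (w t ω j + γ) * (w t ω j * lam t ω j)
                = w t ω j * lam t ω j * γ / (w t ω j + γ) := by
              field_simp
              ring
            rw [heq, div_le_iff₀ hwγ]
            have h1 : w t ω j * lam t ω j ≤ w t ω j * L :=
              mul_le_mul_of_nonneg_left hl1 hw0.le
            have h2 : w t ω j * L ≤ (w t ω j + γ) * L :=
              mul_le_mul_of_nonneg_right (by linarith) hL.le
            calc w t ω j * lam t ω j * γ ≤ (w t ω j + γ) * L * γ :=
                  mul_le_mul_of_nonneg_right (h1.trans h2) hγ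
              _ = γ * L * (w t ω j + γ) := by ring
        _ = γ * L * M := by simp [mul_comm]
    calc ∑ t ∈ range T, ∑ j, w t ω j * lam t ω j - ∑ t ∈ range T, C t ω
        = ∑ t ∈ range T, ((∑ j, w t ω j * lam t ω j) - C t ω) := by
          rw [Finset.sum_sub_distrib]
      _ ≤ ∑ _t ∈ range T, γ * L * M := Finset.sum_le_sum fun t _ => hper t
      _ = γ * T * L * M := by simp [mul_comm]; ring
  -- event inclusion
  have hsub : Bᶜ ⊆ {ω | ∑ t ∈ Finset.range T, ∑ j, w t ω j * lam t ω j
      - ∑ t ∈ Finset.range T, (w t ω (jt t ω) / (w t ω (jt t ω) + γ)) * ℓ t ω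
      ≤ γ * T * L * M + L * Real.sqrt (2 * T * Real.log (1 / δ))} := by
    intro ω hω
    have hXa : X ω < a := lt_of_not_ge hω
    have hXsplit : X ω = ∑ t ∈ range T, C t ω - ∑ t ∈ range T, Z t ω := by
      simp only [hXdef, hYdef]
      exact Finset.sum_sub_distrib ..
    have hZsum : ∑ t ∈ Finset.range T, (w t ω (jt t ω) / (w t ω (jt t ω) + γ)) * ℓ t ω
        = ∑ t ∈ range T, Z t ω := rfl
    simp only [Set.mem_setOf_eq]
    rw [hZsum, ← hadef]
    have hd := hdet ω
    have h3 : ∑ t ∈ range T, C t ω - ∑ t ∈ range T, Z t ω < a := by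
      rw [← hXsplit]; exact hXa
    linarith
  calc ENNReal.ofReal (1 - δ) = 1 - ENNReal.ofReal δ := by
        rw [ENNReal.ofReal_sub _ hδ0.le, ENNReal.ofReal_one]
    _ ≤ 1 - μ B := tsub_le_tsub_left hμB 1
    _ = μ Bᶜ := (prob_compl_eq_one_sub hB_meas).symm
    _ ≤ _ := measure_mono hsub
end
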